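/- arXiv:1905.01340 — 3 statements merged into one kernel-verified Lean document; each statement's English description precedes it below -/
import Mathlib

section
/- The palindromic c-factorization of the Fibonacci word f is pc(f) = (c_{−1}, c_0, c_1, c_2, …) where c_{−1} = 0, c_0 = 1, c_1 = 0, and c_n = f̂_{n−1} f̂_n f̂_{n−1} for all n ≥ 2. That is, f = c_{−1} c_0 c_1 c_2 ⋯ and each factor c_i is the longest palindromic prefix of the suffix c_i c_{i+1} c_{i+2} ⋯ that has an occurrence in f at some position j < |c_{−1} c_0 ⋯ c_{i−1}|, or, if no such palindromic prefix exists, c_i is a single letter. -/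
/-- The finite word `u` occurs at position `j` in the infinite word `w`. -/
def OccursAt (u : List ℕ) (w : ℕ → ℕ) (j : ℕ) : Prop :=
  ∀ i < u.length, w (j + i) = u.getD i 0

/-- The finite word `u` is a prefix of the infinite word `w`. -/
def InfPrefix (u : List ℕ) (w : ℕ → ℕ) : Prop :=
  OccursAt u w 0

/-- The suffix of the infinite word `w` starting at position `j`. -/
def suffixFrom (w : ℕ → ℕ) (j : ℕ) : ℕ → ℕ :=
  fun i => w (j + i)

/-- The finite word `u` is a palindrome. -/
def Pal (u : List ℕ) : Prop := u.reverse = u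
/-- The sequence `c` of finite words is the palindromic c-factorization of the
infinite word `w`: the partial concatenations are prefixes of `w` whose lengths tend to
infinity (so that `w = c 0 · c 1 · c 2 ⋯`), and each factor `c i` is the longest
non-empty palindromic prefix of the remaining suffix of `w` having an occurrence in `w`
at some position `j < |c 0 ⋯ c (i-1)|`, or, if no such palindromic prefix exists,
`c i` is the single letter of `w` at position `|c 0 ⋯ c (i-1)|`. -/
def IsPalCFact (w : ℕ → ℕ) (c : ℕ → List ℕ) : Prop :=
  (∀ n, InfPrefix (((List.range n).map c).flatten) w) ∧
  (∀ N, ∃ n, N ≤ (((List.range n).map c).flatten).length) ∧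
  (∀ i,
    (c i ≠ [] ∧ Pal (c i) ∧
      InfPrefix (c i) (suffixFrom w (((List.range i).map c).flatten).length) ∧
      (∃ j < (((List.range i).map c).flatten).length, OccursAt (c i) w j) ∧
      (∀ u : List ℕ, Pal u →
        InfPrefix u (suffixFrom w (((List.range i).map c).flatten).length) →
        (∃ j < (((List.range i).map c).flatten).length, OccursAt u w j) →
        u.length ≤ (c i).length))
    ∨ ((¬ ∃ u : List ℕ, u ≠ [] ∧ Pal u ∧
          InfPrefix u (suffixFrom w (((List.range i).map c).flatten).length) ∧
          ∃ j < (((List.range i).map c).flatten).length, OccursAt u w j) ∧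
        c i = [w (((List.range i).map c).flatten).length]))
/-- The Fibonacci morphism `φ : 0 ↦ 01, 1 ↦ 0` on letters. -/
def phiF (a : ℕ) : List ℕ := if a = 0 then [0, 1] else [0]

/-- The Fibonacci morphism applied to a finite word. -/
def phiFW (u : List ℕ) : List ℕ := u.flatMap phiF

/-- The iterates `h n = φⁿ(0)` of the Fibonacci morphism on `0`. -/
def fibh : ℕ → List ℕ
  | 0 => [0]
  | n + 1 => phiFW (fibh n)

/-- The Fibonacci word, the infinite fixed point of `φ` beginning with `0`
(its `i`-th letter is the `i`-th letter of any sufficiently long iterate `φⁿ(0)`). -/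
def fibWord : ℕ → ℕ := fun i => (fibh (i + 1)).getD i 0

/-- The singular words of the Fibonacci word:
`f̂ 0 = ε`, `f̂ 1 = 0`, `f̂ 2 = 1`, `f̂ 3 = 00`, and `f̂ n = f̂ (n-2) f̂ (n-3) f̂ (n-2)` for `n ≥ 4`. -/
def fhat : ℕ → List ℕ
  | 0 => []
  | 1 => [0]
  | 2 => [1]
  | 3 => [0, 0]
  | n + 4 => fhat (n + 2) ++ fhat (n + 1) ++ fhat (n + 2)

/-- The factors of the palindromic c-factorization of the Fibonacci word, indexed from `0`:
`c₋₁ = 0`, `c₀ = 1`, `c₁ = 0`, and `cₙ = f̂_{n-1} f̂_n f̂_{n-1}` for `n ≥ 2`. -/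
def fibCSeq : ℕ → List ℕ
  | 0 => [0]
  | 1 => [1]
  | 2 => [0]
  | n + 3 => fhat (n + 1) ++ fhat (n + 2) ++ fhat (n + 1)

-- list utilities
lemma getD_prefix {u v : List ℕ} (h : u <+: v) {i : ℕ} (hi : i < u.length) :
    v.getD i 0 = u.getD i 0 := by
  obtain ⟨t, rfl⟩ := h
  simp only [List.getD_eq_getElem?_getD, List.getElem?_append, hi, if_pos]

lemma phiFW_append (u v : List ℕ) : phiFW (u ++ v) = phiFW u ++ phiFW v := by
  simp [phiFW]

lemma phiFW_cons (a : ℕ) (u : List ℕ) : phiFW (a :: u) = phiF a ++ phiFW u := by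
  simp [phiFW]

lemma fibh_succ_succ (n : ℕ) : fibh (n + 2) = fibh (n + 1) ++ fibh n := by
  induction n with
  | zero => decide
  | succ n ih =>
      show phiFW (fibh (n+2)) = phiFW (fibh (n+1)) ++ fibh (n+1)
      rw [ih, phiFW_append]
      rfl

lemma fibh_prefix_succ (n : ℕ) : fibh n <+: fibh (n + 1) := by
  cases n with
  | zero => exact ⟨[1], rfl⟩
  | succ n => rw [fibh_succ_succ]; exact ⟨fibh n, rfl⟩

lemma fibh_prefix {m n : ℕ} (h : m ≤ n) : fibh m <+: fibh n := by
  induction n with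
  | zero => simp_all
  | succ n ih =>
      rcases Nat.lt_or_ge m (n+1) with h'|h'
      · exact (ih (by omega)).trans (fibh_prefix_succ n)
      · have : m = n + 1 := by omega
        subst this; exact List.prefix_rfl

lemma fibh_length_lt (n : ℕ) : n < (fibh n).length := by
  induction n using Nat.strong_induction_on with
  | _ n ih =>
    match n with
    | 0 => decide
    | 1 => decide
    | (m+2) =>
        rw [fibh_succ_succ]
        have h1 := ih (m+1) (by omega)
        have h2 := ih m (by omega)
        simp only [List.length_append]
        omega

lemma fibWord_eval {m i : ℕ} (hi : i < (fibh m).length) :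
    fibWord i = (fibh m).getD i 0 := by
  show (fibh (i+1)).getD i 0 = (fibh m).getD i 0
  rcases Nat.le_total m (i+1) with h|h
  · exact getD_prefix (fibh_prefix h) hi
  · exact (getD_prefix (fibh_prefix h) (Nat.lt_of_lt_of_le (fibh_length_lt i) (List.IsPrefix.length_le (fibh_prefix_succ i) : (fibh i).length ≤ _))).symm
lemma fhat_rec (n : ℕ) : fhat (n + 3) = fhat (n + 1) ++ fhat n ++ fhat (n + 1) := by
  cases n with
  | zero => decide
  | succ m => rfl

-- Fibonacci numbers matching lengths
def Fb : ℕ → ℕ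
  | 0 => 0
  | 1 => 1
  | n + 2 => Fb n + Fb (n + 1)

lemma fhat_length (n : ℕ) : (fhat n).length = Fb n := by
  induction n using Nat.strong_induction_on with
  | _ n ih =>
    match n with
    | 0 => rfl
    | 1 => rfl
    | 2 => rfl
    | (m+3) =>
        rw [fhat_rec, List.length_append, List.length_append,
          ih (m+1) (by omega), ih m (by omega)]
        show Fb (m+1) + Fb m + Fb (m+1) = Fb (m+3)
        show _ = Fb (m+1) + Fb (m+2)
        show _ = Fb (m+1) + (Fb m + Fb (m+1))
        omega

lemma Fb_pos (n : ℕ) (h : 1 ≤ n) : 0 < Fb n := by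
  induction n using Nat.strong_induction_on with
  | _ n ih =>
    match n with
    | 1 => decide
    | 2 => decide
    | (m+3) => have := ih (m+2) (by omega) (by omega); show 0 < Fb (m+1) + Fb (m+2); omega

lemma fhat_pal (n : ℕ) : Pal (fhat n) := by
  induction n using Nat.strong_induction_on with
  | _ n ih =>
    match n with
    | 0 => rfl
    | 1 => rfl
    | 2 => rfl
    | (m+3) =>
        have h1 : Pal (fhat (m+1)) := ih (m+1) (by omega)
        have h2 : Pal (fhat m) := ih m (by omega)
        show Pal _
        rw [fhat_rec]
        unfold Pal at *
        simp [List.reverse_append, h1, h2, List.append_assoc]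

lemma fhat_mem {n a : ℕ} (h : a ∈ fhat n) : a = 0 ∨ a = 1 := by
  induction n using Nat.strong_induction_on with
  | _ n ih =>
    match n with
    | 0 => simp [fhat] at h
    | 1 => simp [fhat] at h; omega
    | 2 => simp [fhat] at h; omega
    | (m+3) =>
        rw [fhat_rec] at h
        simp only [List.mem_append] at h
        rcases h with (h|h)|h
        · exact ih (m+1) (by omega) h
        · exact ih m (by omega) h
        · exact ih (m+1) (by omega) h
def tl (k : ℕ) : ℕ := k % 2

lemma tl_add2 (k : ℕ) : tl (k + 2) = tl k := by
  simp [tl, Nat.add_mod_right]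

lemma singA (k : ℕ) : [tl (k+1)] ++ fibh k = fhat (k + 2) ++ [tl k] := by
  induction k using Nat.strong_induction_on with
  | _ k ih =>
    match k with
    | 0 => decide
    | 1 => decide
    | 2 => decide
    | (m+3) =>
        have hA1 : [tl (m+2)] ++ fibh (m+1) = fhat (m+3) ++ [tl (m+1)] := ih (m+1) (by omega)
        have hA0 : [tl (m+1)] ++ fibh m = fhat (m+2) ++ [tl m] := ih m (by omega)
        have hh : fibh (m+3) = fibh (m+1) ++ fibh m ++ fibh (m+1) := by
          rw [fibh_succ_succ, fibh_succ_succ]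
        have ht4 : tl (m+4) = tl (m+2) := tl_add2 (m+2)
        have ht2 : tl (m+2) = tl m := tl_add2 m
        calc [tl (m+4)] ++ fibh (m+3)
            = ([tl (m+2)] ++ fibh (m+1)) ++ (fibh m ++ fibh (m+1)) := by
              rw [hh, ht4]; simp [List.append_assoc]
          _ = fhat (m+3) ++ (([tl (m+1)] ++ fibh m) ++ fibh (m+1)) := by
              rw [hA1]; simp [List.append_assoc]
          _ = fhat (m+3) ++ fhat (m+2) ++ ([tl (m+2)] ++ fibh (m+1)) := by
              rw [hA0, ← ht2]; simp [List.append_assoc]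
          _ = fhat (m+3) ++ fhat (m+2) ++ fhat (m+3) ++ [tl (m+1)] := by
              rw [hA1]; simp [List.append_assoc]
          _ = fhat (m+5) ++ [tl (m+3)] := by
              rw [fhat_rec (m+2), tl_add2 (m+1)]

def Sw (k : ℕ) : List ℕ := ((List.range k).map (fun j => fhat (j+1))).flatten

lemma Sw_succ (k : ℕ) : Sw (k+1) = Sw k ++ fhat (k+1) := by
  unfold Sw
  rw [List.range_succ]
  simp

lemma singB (k : ℕ) : fibh k = Sw k ++ [tl k] := by
  induction k using Nat.strong_induction_on with
  | _ k ih =>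
    match k with
    | 0 => rfl
    | 1 => rfl
    | (m+2) =>
        rw [fibh_succ_succ, ih (m+1) (by omega), List.append_assoc,
          show [tl (m+1)] ++ fibh m = fhat (m+2) ++ [tl m] from singA m,
          Sw_succ (m+1), ← tl_add2 m]
        simp [List.append_assoc]
def Cw (n : ℕ) : List ℕ := ((List.range n).map fibCSeq).flatten

lemma Cw_succ (n : ℕ) : Cw (n+1) = Cw n ++ fibCSeq n := by
  unfold Cw
  rw [List.range_succ]
  simp

lemma Cw_eq (n : ℕ) : Cw (n+3) = Sw (n+2) ++ fhat (n+1) ++ fhat n := by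
  induction n with
  | zero => decide
  | succ m ih =>
      rw [Cw_succ, ih]
      show _ = Sw (m+3) ++ fhat (m+2) ++ fhat (m+1)
      rw [Sw_succ (m+2), fhat_rec m, show fibCSeq (m+3) = fhat (m+1) ++ fhat (m+2) ++ fhat (m+1) from rfl]
      simp [List.append_assoc]

lemma Sw_prefix_fibh (k : ℕ) : Sw k <+: fibh k := by
  rw [singB k]; exact ⟨[tl k], rfl⟩

lemma Sw_prefix {k m : ℕ} (h : k ≤ m) : Sw k <+: Sw m := by
  induction m with
  | zero => have : k = 0 := by omega
            subst this; exact List.prefix_rfl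
  | succ m ih =>
      rcases Nat.lt_or_ge k (m+1) with h'|h'
      · exact (ih (by omega)).trans (by rw [Sw_succ]; exact ⟨fhat (m+1), rfl⟩)
      · have : k = m+1 := by omega
        subst this; exact List.prefix_rfl

lemma infPrefix_of_fibh {u : List ℕ} {m : ℕ} (h : u <+: fibh m) : InfPrefix u fibWord := by
  intro i hi
  have hi' : i < (fibh m).length := lt_of_lt_of_le hi h.length_le
  rw [Nat.zero_add, fibWord_eval hi', getD_prefix h hi]

lemma Cw_prefix_Sw (n : ℕ) : Cw (n+3) <+: Sw (n+3) := by
  rw [Cw_eq, Sw_succ (n+2), fhat_rec n]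
  simp only [List.append_assoc]
  exact List.prefix_append_right_inj _ |>.mpr
    (List.prefix_append_right_inj _ |>.mpr ⟨fhat (n+1), by simp⟩)

lemma part1 (n : ℕ) : InfPrefix (Cw n) fibWord := by
  match n with
  | 0 => intro i hi; simp [Cw] at hi
  | 1 => exact infPrefix_of_fibh (m := 1) (by decide)
  | 2 => exact infPrefix_of_fibh (m := 2) (by decide)
  | (m+3) =>
      exact infPrefix_of_fibh ((Cw_prefix_Sw m).trans (Sw_prefix_fibh (m+3)))

lemma fibCSeq_ne (i : ℕ) : fibCSeq i ≠ [] := by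
  match i with
  | 0 => decide
  | 1 => decide
  | 2 => decide
  | (m+3) =>
      show fhat (m+1) ++ fhat (m+2) ++ fhat (m+1) ≠ []
      have := fhat_length (m+1)
      have := Fb_pos (m+1) (by omega)
      intro h
      simp only [List.append_eq_nil_iff] at h
      have := h.1.1
      simp_all

lemma Cw_len (n : ℕ) : n ≤ (Cw n).length := by
  induction n with
  | zero => simp
  | succ m ih =>
      rw [Cw_succ, List.length_append]
      have : 1 ≤ (fibCSeq m).length := by
        rcases List.length_pos_iff.mpr (fibCSeq_ne m) with h
        omega
      omega

lemma Sw_len (k : ℕ) : (Sw k).length + 1 = Fb (k+2) := by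
  induction k with
  | zero => rfl
  | succ m ih =>
      rw [Sw_succ, List.length_append, fhat_length]
      show _ = Fb (m+1) + Fb (m+2)
      omega
-- occurrence utilities
lemma occursAt_prefix {u v : List ℕ} {w : ℕ → ℕ} {j : ℕ} (h : u <+: v)
    (hv : OccursAt v w j) : OccursAt u w j := by
  intro i hi
  rw [hv i (lt_of_lt_of_le hi h.length_le), getD_prefix h hi]

lemma infPrefix_occursAt {A B : List ℕ} {w : ℕ → ℕ} (h : InfPrefix (A ++ B) w) :
    OccursAt B w A.length := by
  intro i hi
  have := h (A.length + i) (by simp; omega)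
  rw [Nat.zero_add] at this
  rw [this, List.getD_eq_getElem?_getD, List.getD_eq_getElem?_getD,
    List.getElem?_append_right (by omega : A.length ≤ A.length + i), Nat.add_sub_cancel_left]

lemma infPrefix_suffixFrom {A B : List ℕ} {w : ℕ → ℕ} (h : InfPrefix (A ++ B) w) :
    InfPrefix B (suffixFrom w A.length) := by
  intro i hi
  simpa [suffixFrom, Nat.zero_add] using infPrefix_occursAt h i hi

-- phi on singular words
lemma phiE (j : ℕ) : (j % 2 = 0 → phiFW (fhat j) ++ [0] = fhat (j+1)) ∧
    (j % 2 = 1 → phiFW (fhat j) = [0] ++ fhat (j+1)) := by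
  induction j using Nat.strong_induction_on with
  | _ j ih =>
    match j with
    | 0 => exact ⟨fun _ => by decide, fun h => by simp at h⟩
    | 1 => exact ⟨fun h => by simp at h, fun _ => by decide⟩
    | 2 => exact ⟨fun _ => by decide, fun h => by simp at h⟩
    | (m+3) =>
        have h1 := ih (m+1) (by omega)
        have h0 := ih m (by omega)
        have hsplit : phiFW (fhat (m+3)) =
            phiFW (fhat (m+1)) ++ phiFW (fhat m) ++ phiFW (fhat (m+1)) := by
          rw [fhat_rec m, phiFW_append, phiFW_append]
        constructor
        · intro hpar
          -- m+3 even, m odd, m+1 even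
          have hmo : m % 2 = 1 := by omega
          have hm1e : (m+1) % 2 = 0 := by omega
          have e1 : phiFW (fhat (m+1)) ++ [0] = fhat (m+2) := h1.1 hm1e
          have e0 : phiFW (fhat m) = [0] ++ fhat (m+1) := h0.2 hmo
          rw [hsplit, e0]
          calc phiFW (fhat (m+1)) ++ ([0] ++ fhat (m+1)) ++ phiFW (fhat (m+1)) ++ [0]
              = (phiFW (fhat (m+1)) ++ [0]) ++ fhat (m+1) ++ (phiFW (fhat (m+1)) ++ [0]) := by
                simp [List.append_assoc]
            _ = fhat (m+2) ++ fhat (m+1) ++ fhat (m+2) := by rw [e1]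
            _ = fhat (m+4) := (fhat_rec (m+1)).symm
        · intro hpar
          have hme : m % 2 = 0 := by omega
          have hm1o : (m+1) % 2 = 1 := by omega
          have e1 : phiFW (fhat (m+1)) = [0] ++ fhat (m+2) := h1.2 hm1o
          have e0 : phiFW (fhat m) ++ [0] = fhat (m+1) := h0.1 hme
          rw [hsplit, e1]
          calc ([0] ++ fhat (m+2)) ++ phiFW (fhat m) ++ ([0] ++ fhat (m+2))
              = [0] ++ (fhat (m+2) ++ (phiFW (fhat m) ++ [0]) ++ fhat (m+2)) := by
                simp [List.append_assoc]
            _ = [0] ++ (fhat (m+2) ++ fhat (m+1) ++ fhat (m+2)) := by rw [e0]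
            _ = [0] ++ fhat (m+4) := by rw [← fhat_rec (m+1)]

def ustar (n : ℕ) : List ℕ :=
  fhat (n+1) ++ fhat (n+2) ++ fhat (n+1) ++ fhat (n+2) ++ fhat (n+1)

lemma ustar_even {n : ℕ} (h : n % 2 = 0) :
    phiFW (ustar n) = [0] ++ ustar (n+1) := by
  have ex : phiFW (fhat (n+1)) = [0] ++ fhat (n+2) := (phiE (n+1)).2 (by omega)
  have ey : phiFW (fhat (n+2)) ++ [0] = fhat (n+3) := (phiE (n+2)).1 (by omega)
  unfold ustar
  rw [phiFW_append, phiFW_append, phiFW_append, phiFW_append, ex]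
  calc ([0] ++ fhat (n+2)) ++ phiFW (fhat (n+2)) ++ ([0] ++ fhat (n+2)) ++
        phiFW (fhat (n+2)) ++ ([0] ++ fhat (n+2))
      = [0] ++ (fhat (n+2) ++ (phiFW (fhat (n+2)) ++ [0]) ++ fhat (n+2) ++
        (phiFW (fhat (n+2)) ++ [0]) ++ fhat (n+2)) := by simp [List.append_assoc]
    _ = [0] ++ (fhat (n+2) ++ fhat (n+3) ++ fhat (n+2) ++ fhat (n+3) ++ fhat (n+2)) := by
        rw [ey]
    _ = [0] ++ ustar (n+1) := rfl

lemma ustar_odd {n : ℕ} (h : n % 2 = 1) :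
    phiFW (ustar n) ++ [0] = ustar (n+1) := by
  have ex : phiFW (fhat (n+1)) ++ [0] = fhat (n+2) := (phiE (n+1)).1 (by omega)
  have ey : phiFW (fhat (n+2)) = [0] ++ fhat (n+3) := (phiE (n+2)).2 (by omega)
  unfold ustar
  rw [phiFW_append, phiFW_append, phiFW_append, phiFW_append, ey]
  calc phiFW (fhat (n+1)) ++ ([0] ++ fhat (n+3)) ++ phiFW (fhat (n+1)) ++
        ([0] ++ fhat (n+3)) ++ phiFW (fhat (n+1)) ++ [0]
      = (phiFW (fhat (n+1)) ++ [0]) ++ fhat (n+3) ++ (phiFW (fhat (n+1)) ++ [0]) ++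
        fhat (n+3) ++ (phiFW (fhat (n+1)) ++ [0]) := by simp [List.append_assoc]
    _ = fhat (n+2) ++ fhat (n+3) ++ fhat (n+2) ++ fhat (n+3) ++ fhat (n+2) := by rw [ex]
    _ = ustar (n+1) := rfl
-- block position function
def bb : ℕ → ℕ
  | 0 => 0
  | k+1 => bb k + (if fibWord k = 0 then 2 else 1)

lemma bb_strictMono : StrictMono bb := by
  apply strictMono_nat_of_lt_succ
  intro k
  show bb k < bb k + _
  split <;> omega

lemma getD_append_right' (A B : List ℕ) (i : ℕ) :
    (A ++ B).getD (A.length + i) 0 = B.getD i 0 := by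
  rw [List.getD_eq_getElem?_getD, List.getD_eq_getElem?_getD,
    List.getElem?_append_right (by omega : A.length ≤ A.length + i), Nat.add_sub_cancel_left]

lemma occursAt_drop {A B : List ℕ} {w : ℕ → ℕ} {j : ℕ} (h : OccursAt (A ++ B) w j) :
    OccursAt B w (j + A.length) := by
  intro i hi
  have := h (A.length + i) (by simp; omega)
  rw [getD_append_right'] at this
  rw [← this]
  congr 1
  omega

lemma phiF_getD0 (a : ℕ) : (phiF a).getD 0 0 = 0 := by
  unfold phiF; split <;> rfl

lemma phiF_length (a : ℕ) : (phiF a).length = if a = 0 then 2 else 1 := by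
  unfold phiF; split <;> rfl

lemma bval {u : List ℕ} (hu : InfPrefix u fibWord) :
    ∀ j, j ≤ u.length → bb j = (phiFW (u.take j)).length := by
  intro j
  induction j with
  | zero => intro _; simp [phiFW, bb]
  | succ j ih =>
      intro hj
      have hj' : j < u.length := by omega
      have htake : u.take (j+1) = u.take j ++ [u.getD j 0] := by
        rw [List.take_succ]
        congr 1
        rw [List.getD_eq_getElem?_getD, List.getElem?_eq_getElem hj']
        rfl
      have hfj : fibWord j = u.getD j 0 := by
        have := hu j hj'
        rwa [Nat.zero_add] at this
      rw [htake, phiFW_append]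
      show bb j + _ = _
      rw [ih (by omega), List.length_append]
      congr 1
      show (if fibWord j = 0 then 2 else 1) = (phiFW [u.getD j 0]).length
      rw [hfj]
      show _ = (phiF (u.getD j 0) ++ []).length
      rw [List.append_nil, phiF_length]

lemma fibh_infPrefix (m : ℕ) : InfPrefix (fibh m) fibWord :=
  infPrefix_of_fibh List.prefix_rfl

lemma blockOcc (k : ℕ) : OccursAt (phiF (fibWord k)) fibWord (bb k) := by
  have hk : k < (fibh (k+1)).length :=
    lt_of_lt_of_le (fibh_length_lt k) (fibh_prefix (by omega)).length_le
  set u := fibh (k+1) with hudef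
  have hbb : bb k = (phiFW (u.take k)).length :=
    bval (fibh_infPrefix (k+1)) k (by rw [← hudef]; omega)
  have hfk : fibWord k = u.getD k 0 := by
    have := fibh_infPrefix (k+1) k hk
    rwa [Nat.zero_add] at this
  have hdecomp : phiFW u = phiFW (u.take k) ++ (phiF (fibWord k) ++ phiFW (u.drop (k+1))) := by
    conv_lhs => rw [← List.take_append_drop k u]
    rw [phiFW_append]
    congr 1
    rw [List.drop_eq_getElem_cons hk, phiFW_cons, hfk]
    congr 2
    rw [List.getD_eq_getElem?_getD, List.getElem?_eq_getElem hk]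
    rfl
  have hfib2 : phiFW u = fibh (k+2) := rfl
  intro i hi
  have hlen : bb k + i < (fibh (k+2)).length := by
    rw [← hfib2, hdecomp]
    simp only [List.length_append]
    omega
  rw [fibWord_eval hlen, ← hfib2, hdecomp, hbb]
  have : (phiF (fibWord k) ++ phiFW (u.drop (k+1))).getD i 0 = (phiF (fibWord k)).getD i 0 :=
    getD_prefix ⟨phiFW (u.drop (k+1)), rfl⟩ hi
  rw [getD_append_right', this]

lemma f_bb_zero (k : ℕ) : fibWord (bb k) = 0 := by
  have := blockOcc k 0 (by rw [phiF_length]; split <;> omega)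
  rwa [Nat.add_zero, phiF_getD0] at this

lemma f_bb_one {k : ℕ} (h : fibWord k = 0) : fibWord (bb k + 1) = 1 := by
  have := blockOcc k 1 (by rw [phiF_length, if_pos h]; omega)
  rwa [h, show (phiF 0).getD 1 0 = 1 from rfl] at this

lemma bb_succ_zero {k : ℕ} (h : fibWord k = 0) : bb (k+1) = bb k + 2 := by
  show bb k + _ = _
  rw [if_pos h]

lemma bb_succ_one {k : ℕ} (h : fibWord k ≠ 0) : bb (k+1) = bb k + 1 := by
  show bb k + _ = _
  rw [if_neg h]

lemma fibh_mem {m a : ℕ} (h : a ∈ fibh m) : a = 0 ∨ a = 1 := by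
  induction m generalizing a with
  | zero => simp [fibh] at h; omega
  | succ m ih =>
      have : a ∈ phiFW (fibh m) := h
      rw [phiFW, List.mem_flatMap] at this
      obtain ⟨b, _, hb⟩ := this
      unfold phiF at hb
      split at hb <;> simp at hb <;> omega

lemma f_total (i : ℕ) : fibWord i = 0 ∨ fibWord i = 1 := by
  have hi : i < (fibh (i+1)).length :=
    lt_of_lt_of_le (fibh_length_lt i) (fibh_prefix (by omega)).length_le
  have : fibWord i ∈ fibh (i+1) := by
    show (fibh (i+1)).getD i 0 ∈ _
    rw [List.getD_eq_getElem?_getD, List.getElem?_eq_getElem hi]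
    exact List.getElem_mem _
  exact fibh_mem this

lemma bcover (q : ℕ) : (∃ k, bb k = q) ∨ (∃ k, bb k + 1 = q ∧ fibWord q = 1) := by
  induction q with
  | zero => exact Or.inl ⟨0, rfl⟩
  | succ q ih =>
      rcases ih with ⟨k, hk⟩ | ⟨k, hk, hq⟩
      · rcases f_total k with h | h
        · right
          refine ⟨k, by omega, ?_⟩
          rw [← hk] at *
          exact f_bb_one h
        · left
          exact ⟨k+1, by rw [bb_succ_one (by omega)]; omega⟩
      · left
        have hfk : fibWord k = 0 := by
          rcases f_total k with h | h
          · exact h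
          · exfalso
            have h1 : bb (k+1) = q := by rw [bb_succ_one (by omega)]; omega
            have h2 := f_bb_zero (k+1)
            rw [h1, hq] at h2
            omega
        exact ⟨k+1, by rw [bb_succ_zero hfk]; omega⟩

lemma f_one_pred {q : ℕ} (h : fibWord q = 1) : ∃ k, bb k + 1 = q := by
  rcases bcover q with ⟨k, hk⟩ | ⟨k, hk, _⟩
  · exfalso; rw [← hk, f_bb_zero] at h; omega
  · exact ⟨k, hk⟩

lemma f_after_one {q : ℕ} (h : fibWord q = 1) : fibWord (q+1) = 0 := by
  rcases bcover q with ⟨k, hk⟩ | ⟨k, hk, _⟩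
  · rw [← hk, f_bb_zero] at h; omega
  · have hfk : fibWord k = 0 := by
      rcases f_total k with h' | h'
      · exact h'
      · exfalso
        have h1 : bb (k+1) = q := by rw [bb_succ_one (by omega)]; omega
        have := f_bb_zero (k+1)
        rw [h1, h] at this
        omega
    have : bb (k+1) = q + 1 := by rw [bb_succ_zero hfk]; omega
    rw [← this]
    exact f_bb_zero (k+1)
lemma sync : ∀ (w : List ℕ) (q : ℕ), (∀ a ∈ w, a = 0 ∨ a = 1) →
    OccursAt (phiFW w ++ [0]) fibWord q → ∃ k, bb k = q ∧ OccursAt w fibWord k := by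
  intro w
  induction w with
  | nil =>
      intro q _ hocc
      have h0 : fibWord q = 0 := by
        have := hocc 0 (by simp [phiFW])
        simpa [phiFW] using this
      rcases bcover q with ⟨k, hk⟩ | ⟨k, hk, hq⟩
      · exact ⟨k, hk, by intro i hi; simp at hi⟩
      · rw [hq] at h0; omega
  | cons a w' ih =>
      intro q hmem hocc
      have h0 : fibWord q = 0 := by
        have := hocc 0 (by simp)
        rw [Nat.add_zero] at this
        rw [this, phiFW_cons]
        rw [show phiF a ++ phiFW w' ++ [0] = phiF a ++ (phiFW w' ++ [0]) by simp,
          getD_prefix (⟨phiFW w' ++ [0], rfl⟩ : phiF a <+: _) (by rw [phiF_length]; split <;> omega)]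
        exact phiF_getD0 a
      have hbk : ∃ k, bb k = q := by
        rcases bcover q with h | ⟨k, hk, hq⟩
        · exact h
        · rw [hq] at h0; omega
      obtain ⟨k, hk⟩ := hbk
      rcases hmem a (by simp) with ha | ha
      · -- a = 0 : block [0,1]
        subst ha
        have h1 : fibWord (q + 1) = 1 := by
          have := hocc 1 (by simp [phiFW_cons, phiF])
          rw [this, phiFW_cons, show phiF 0 ++ phiFW w' ++ [0] = phiF 0 ++ (phiFW w' ++ [0]) by simp,
            getD_prefix (⟨phiFW w' ++ [0], rfl⟩ : phiF 0 <+: _) (by simp [phiF])]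
          rfl
        have hfk : fibWord k = 0 := by
          rcases f_total k with h | h
          · exact h
          · exfalso
            have hb1 : bb (k+1) = q + 1 := by rw [bb_succ_one (by omega)]; omega
            have := f_bb_zero (k+1)
            rw [hb1, h1] at this; omega
        have hshift : OccursAt (phiFW w' ++ [0]) fibWord (q + 2) := by
          have := occursAt_drop (A := phiF 0) (B := phiFW w' ++ [0]) (w := fibWord) (j := q) ?_
          · simpa [phiF] using this
          · have : phiF 0 ++ (phiFW w' ++ [0]) = phiFW (0 :: w') ++ [0] := by
              rw [phiFW_cons]; simp
            rw [this]; exact hocc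
        obtain ⟨k', hk', hocc'⟩ := ih (q+2) (fun b hb => hmem b (by simp [hb])) hshift
        have hkk : k' = k + 1 := by
          apply bb_strictMono.injective
          rw [hk', bb_succ_zero hfk, hk]
        subst hkk
        refine ⟨k, hk, ?_⟩
        intro i hi
        match i with
        | 0 => simpa using hfk
        | (i+1) =>
            have := hocc' i (by simpa using hi)
            rw [show k + (i+1) = k + 1 + i by omega, this]
            rfl
      · -- a = 1 : block [0]
        subst ha
        have h1 : fibWord (q + 1) = 0 := by
          have hho := hocc 1 (by simp [phiFW_cons, phiF])
          rw [hho, phiFW_cons]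
          show (phiFW w' ++ [0]).getD 0 0 = 0
          cases w' with
          | nil => rfl
          | cons b w'' =>
              rw [phiFW_cons, show phiF b ++ phiFW w'' ++ [0] = phiF b ++ (phiFW w'' ++ [0]) by simp,
                getD_prefix (⟨phiFW w'' ++ [0], rfl⟩ : phiF b <+: _) (by rw [phiF_length]; split <;> omega)]
              exact phiF_getD0 b
        have hfk : fibWord k = 1 := by
          rcases f_total k with h | h
          · exfalso
            have := f_bb_one h
            rw [hk, h1] at this; omega
          · exact h
        have hshift : OccursAt (phiFW w' ++ [0]) fibWord (q + 1) := by
          have := occursAt_drop (A := phiF 1) (B := phiFW w' ++ [0]) (w := fibWord) (j := q) ?_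
          · simpa [phiF] using this
          · have : phiF 1 ++ (phiFW w' ++ [0]) = phiFW (1 :: w') ++ [0] := by
              rw [phiFW_cons]; simp
            rw [this]; exact hocc
        obtain ⟨k', hk', hocc'⟩ := ih (q+1) (fun b hb => hmem b (by simp [hb])) hshift
        have hkk : k' = k + 1 := by
          apply bb_strictMono.injective
          rw [hk', bb_succ_one (by omega), hk]
        subst hkk
        refine ⟨k, hk, ?_⟩
        intro i hi
        match i with
        | 0 => simpa using hfk
        | (i+1) =>
            have := hocc' i (by simpa using hi)
            rw [show k + (i+1) = k + 1 + i by omega, this]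
            rfl
-- length bookkeeping for phiFW images
lemma phiFW_fhat_len_even {j : ℕ} (h : j % 2 = 0) :
    (phiFW (fhat j)).length + 1 = Fb (j+1) := by
  have := congrArg List.length ((phiE j).1 h)
  simpa [fhat_length] using this

lemma phiFW_fhat_len_odd {j : ℕ} (h : j % 2 = 1) :
    (phiFW (fhat j)).length = Fb (j+1) + 1 := by
  have := congrArg List.length ((phiE j).2 h)
  simpa [fhat_length] using this

lemma phiFW_Sw_len (k : ℕ) :
    (phiFW (Sw k)).length + (if k % 2 = 0 then 1 else 0) = (Sw (k+1)).length := by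
  induction k with
  | zero => simp [Sw, phiFW, Sw_succ]; rfl
  | succ k ih =>
      have hsplit : phiFW (Sw (k+1)) = phiFW (Sw k) ++ phiFW (fhat (k+1)) := by
        rw [Sw_succ, phiFW_append]
      have hSw2 : (Sw (k+2)).length = (Sw (k+1)).length + Fb (k+2) := by
        rw [Sw_succ (k+1), List.length_append, fhat_length]
      rcases Nat.even_or_odd k with he | ho
      · have hk : k % 2 = 0 := Nat.even_iff.mp he
        have hk1 : (k+1) % 2 = 1 := by omega
        have hf := phiFW_fhat_len_odd hk1
        rw [hsplit, List.length_append, if_neg (by omega), hf]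
        have h2 := ih
        rw [if_pos hk] at h2
        have e1 : (Sw (k+1+1)).length = (Sw (k+2)).length := rfl
        have e2 : Fb (k+1+1) = Fb (k+2) := rfl
        omega
      · have hk : k % 2 = 1 := Nat.odd_iff.mp ho
        have hk1 : (k+1) % 2 = 0 := by omega
        have hf := phiFW_fhat_len_even hk1
        rw [hsplit, List.length_append, if_pos (by omega)]
        have h2 := ih
        rw [if_neg (by omega)] at h2
        have e1 : (Sw (k+1+1)).length = (Sw (k+2)).length := rfl
        have e2 : Fb (k+1+1) = Fb (k+2) := rfl
        omega

lemma phiFW_Cw_len (n : ℕ) :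
    (phiFW (Cw (n+3))).length + (if n % 2 = 0 then 1 else 0) = (Cw (n+4)).length := by
  have hsplit : phiFW (Cw (n+3)) = phiFW (Sw (n+2)) ++ phiFW (fhat (n+1)) ++ phiFW (fhat n) := by
    rw [Cw_eq, phiFW_append, phiFW_append]
  have hCw4 : (Cw (n+4)).length = (Sw (n+3)).length + Fb (n+2) + Fb (n+1) := by
    rw [Cw_eq (n+1), List.length_append, List.length_append, fhat_length, fhat_length]
  have hS := phiFW_Sw_len (n+2)
  rcases Nat.even_or_odd n with he | ho
  · have hn : n % 2 = 0 := Nat.even_iff.mp he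
    rw [if_pos (by omega : (n+2) % 2 = 0)] at hS
    have hf1 := phiFW_fhat_len_odd (by omega : (n+1) % 2 = 1)
    have hf0 := phiFW_fhat_len_even hn
    rw [hsplit, List.length_append, List.length_append, if_pos hn, hf1, hCw4]
    have e1 : (Sw (n+2+1)).length = (Sw (n+3)).length := rfl
    have e2 : Fb (n+1+1) = Fb (n+2) := rfl
    omega
  · have hn : n % 2 = 1 := Nat.odd_iff.mp ho
    rw [if_neg (by omega : ¬ (n+2) % 2 = 0)] at hS
    have hf1 := phiFW_fhat_len_even (by omega : (n+1) % 2 = 0)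
    have hf0 := phiFW_fhat_len_odd hn
    rw [hsplit, List.length_append, List.length_append, if_neg (by omega), hf0, hCw4]
    have e1 : (Sw (n+2+1)).length = (Sw (n+3)).length := rfl
    have e2 : Fb (n+1+1) = Fb (n+2) := rfl
    omega

lemma bb_Cw (n : ℕ) :
    bb ((Cw (n+3)).length) + (if n % 2 = 0 then 1 else 0) = (Cw (n+4)).length := by
  rw [bval (part1 (n+3)) (Cw (n+3)).length (le_refl _), List.take_length]
  exact phiFW_Cw_len n

-- palindrome getD symmetry
lemma pal_getD {u : List ℕ} (hp : Pal u) {i : ℕ} (hi : i < u.length) :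
    u.getD i 0 = u.getD (u.length - 1 - i) 0 := by
  have hi2 : i < u.reverse.length := by simpa using hi
  have h1 : u.reverse.getD i 0 = u.getD i 0 := by rw [hp]
  have h2 : u.reverse.getD i 0 = u.getD (u.length - 1 - i) 0 := by
    rw [List.getD_eq_getElem _ _ hi2,
      List.getD_eq_getElem _ _ (by omega : u.length - 1 - i < u.length),
      List.getElem_reverse]
  rw [← h1, h2]

lemma fhat_nonempty {n : ℕ} (h : 1 ≤ n) : fhat n ≠ [] := by
  have h1 := fhat_length n
  have h2 := Fb_pos n h
  intro he
  rw [he] at h1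
  simp at h1
  omega

lemma fhat_head_even {n : ℕ} (he : n % 2 = 0) (h2 : 2 ≤ n) : (fhat n).getD 0 0 = 1 := by
  induction n using Nat.strong_induction_on with
  | _ n ih =>
    match n with
    | 2 => rfl
    | 3 => omega
    | (m+4) =>
        rw [fhat_rec (m+1)]
        rw [getD_prefix (⟨fhat (m+1) ++ fhat (m+2), by simp⟩ : fhat (m+2) <+: _)
          (by have := fhat_length (m+2); have := Fb_pos (m+2) (by omega); omega)]
        exact ih (m+2) (by omega) (by omega) (by omega)

lemma fhat_last_even {n : ℕ} (he : n % 2 = 0) (h2 : 2 ≤ n) :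
    (fhat n).getD ((fhat n).length - 1) 0 = 1 := by
  have hlen : 0 < (fhat n).length := by
    have := fhat_length n; have := Fb_pos n (by omega); omega
  have := pal_getD (fhat_pal n) (i := 0) hlen
  rw [Nat.sub_zero] at this
  rw [← this]
  exact fhat_head_even he h2

lemma ustar_mem {n : ℕ} {a : ℕ} (h : a ∈ ustar n) : a = 0 ∨ a = 1 := by
  unfold ustar at h
  simp only [List.mem_append] at h
  rcases h with ((((h|h)|h)|h)|h) <;> exact fhat_mem h
lemma fhat_prefix_ustar (n : ℕ) : fhat (n+2) <+: ustar (n+1) :=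
  ⟨fhat (n+3) ++ fhat (n+2) ++ fhat (n+3) ++ fhat (n+2), by simp [ustar, List.append_assoc]⟩

lemma ustar_len (n : ℕ) : (ustar n).length = 3 * Fb (n+1) + 2 * Fb (n+2) := by
  simp [ustar, fhat_length]
  ring

lemma ustar_head {n : ℕ} (he : n % 2 = 0) : (ustar (n+1)).getD 0 0 = 1 := by
  have hl : 0 < (fhat (n+2)).length := by
    have := fhat_length (n+2); have := Fb_pos (n+2) (by omega); omega
  rw [getD_prefix (fhat_prefix_ustar n) hl]
  exact fhat_head_even (by omega) (by omega)

lemma ustar_pos (n : ℕ) : 0 < (ustar n).length := by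
  rw [ustar_len]
  have := Fb_pos (n+1) (by omega)
  omega

lemma ustar_last {n : ℕ} (he : n % 2 = 0) :
    (ustar (n+1)).getD ((ustar (n+1)).length - 1) 0 = 1 := by
  have hp : Pal (ustar (n+1)) := by
    have p1 := fhat_pal (n+2)
    have p2 := fhat_pal (n+3)
    unfold Pal at *
    simp [ustar, List.reverse_append, p1, p2, List.append_assoc]
  have := pal_getD hp (i := 0) (ustar_pos (n+1))
  rw [Nat.sub_zero] at this
  rw [← this]
  exact ustar_head he

lemma Nocc (n : ℕ) : ∀ j, OccursAt (ustar n) fibWord j → (Cw (n+3)).length ≤ j := by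
  induction n with
  | zero =>
      intro j hocc
      by_contra hlt
      push_neg at hlt
      have h3 : (Cw 3).length = 3 := by decide
      rw [h3] at hlt
      interval_cases j
      · exact absurd (hocc 3 (by decide)) (by decide)
      · exact absurd (hocc 0 (by decide)) (by decide)
      · exact absurd (hocc 1 (by decide)) (by decide)
  | succ n ih =>
      intro j hocc
      by_contra hlt
      push_neg at hlt
      rcases Nat.even_or_odd n with he | ho
      · -- n even
        have hn : n % 2 = 0 := Nat.even_iff.mp he
        have hfj : fibWord j = 1 := by
          have := hocc 0 (ustar_pos (n+1))
          rw [Nat.add_zero] at this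
          rw [this, ustar_head hn]
        obtain ⟨k0, hk0⟩ := f_one_pred hfj
        have hj1 : 1 ≤ j := by omega
        have hfj0 : fibWord (j - 1) = 0 := by
          have := f_bb_zero k0
          rwa [show bb k0 = j - 1 by omega] at this
        set Lu := (ustar (n+1)).length with hLu
        have hlast : fibWord (j + Lu - 1) = 1 := by
          have := hocc (Lu - 1) (by have := ustar_pos (n+1); omega)
          rw [show j + (Lu - 1) = j + Lu - 1 by have := ustar_pos (n+1); omega] at this
          rw [this]
          exact ustar_last hn
        have hafter : fibWord (j + Lu) = 0 := by
          have := f_after_one hlast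
          rwa [show j + Lu - 1 + 1 = j + Lu by have := ustar_pos (n+1); omega] at this
        have hoccW : OccursAt (phiFW (ustar n) ++ [0]) fibWord (j - 1) := by
          rw [ustar_even hn]
          intro i hi
          simp only [List.length_append, List.length_cons, List.length_nil] at hi
          match i with
          | 0 =>
              rw [Nat.add_zero]
              exact hfj0.trans rfl
          | (m+1) =>
              have hm : m < Lu + 1 := by omega
              have hgetD : (([0] ++ ustar (n+1)) ++ [0]).getD (m+1) 0
                  = (ustar (n+1) ++ [0]).getD m 0 := rfl
              rw [hgetD]
              rcases Nat.lt_or_ge m Lu with hmlt | hmge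
              · rw [getD_prefix (⟨[0], rfl⟩ : ustar (n+1) <+: _) hmlt]
                have := hocc m hmlt
                rw [← this]
                congr 1
                omega
              · have hmeq : m = Lu := by omega
                subst hmeq
                have hr := getD_append_right' (ustar (n+1)) [0] 0
                simp only [Nat.add_zero] at hr
                rw [← hLu] at hr
                rw [hr, show j - 1 + (Lu + 1) = j + Lu by omega]
                exact hafter.trans rfl
        obtain ⟨k, hbk, hocck⟩ := sync (ustar n) (j-1) (fun a ha => ustar_mem ha) hoccW
        have hk3 := ih k hocck
        have hmono : bb ((Cw (n+3)).length) ≤ bb k := by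
          rcases Nat.eq_or_lt_of_le hk3 with h | h
          · rw [h]
          · exact le_of_lt (bb_strictMono h)
        have hbbC := bb_Cw n
        rw [if_pos hn] at hbbC
        have e0 : (Cw (n+1+3)).length = (Cw (n+4)).length := rfl
        omega
      · -- n odd
        have hn : n % 2 = 1 := Nat.odd_iff.mp ho
        have hoccW : OccursAt (phiFW (ustar n) ++ [0]) fibWord j := by
          rw [ustar_odd hn]
          exact hocc
        obtain ⟨k, hbk, hocck⟩ := sync (ustar n) j (fun a ha => ustar_mem ha) hoccW
        have hk3 := ih k hocck
        have hmono : bb ((Cw (n+3)).length) ≤ bb k := by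
          rcases Nat.eq_or_lt_of_le hk3 with h | h
          · rw [h]
          · exact le_of_lt (bb_strictMono h)
        have hbbC := bb_Cw n
        rw [if_neg (by omega)] at hbbC
        have e0 : (Cw (n+1+3)).length = (Cw (n+4)).length := rfl
        omega
def HasPd (u : List ℕ) (p : ℕ) : Prop :=
  ∀ i, i + p < u.length → u.getD i 0 = u.getD (i + p) 0

lemma pd_sub {u : List ℕ} {a b : ℕ} (h0 : 0 < a) (hab : a < b) (hlen : a + b ≤ u.length)
    (hpa : HasPd u a) (hpb : HasPd u b) : HasPd u (b - a) := by
  intro i hi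
  rcases Nat.lt_or_ge (i + b) u.length with h | h
  · have h1 := hpa (i + (b - a)) (by omega)
    rw [show i + (b - a) + a = i + b by omega] at h1
    have h2 := hpb i (by omega)
    rw [h2, ← h1]
  · have hia : a ≤ i := by omega
    have h1 := hpa (i - a) (by omega)
    rw [show i - a + a = i by omega] at h1
    have h2 := hpb (i - a) (by omega)
    rw [show i - a + b = i + (b - a) by omega] at h2
    rw [← h1, h2]

lemma fw_aux : ∀ (t p q : ℕ) (u : List ℕ), p + q ≤ t → 0 < p → 0 < q →
    p + q ≤ u.length → HasPd u p → HasPd u q → HasPd u (Nat.gcd p q) := by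
  intro t
  induction t with
  | zero => intro p q u h hp hq _ _ _; omega
  | succ t ih =>
      intro p q u ht hp hq hlen hup huq
      rcases Nat.lt_trichotomy p q with hlt | heq | hgt
      · have hqp : HasPd u (q - p) := pd_sub hp hlt hlen hup huq
        have := ih p (q - p) u (by omega) hp (by omega) (by omega) hup hqp
        rwa [Nat.gcd_sub_self_right (le_of_lt hlt)] at this
      · subst heq
        rwa [Nat.gcd_self]
      · have hpq : HasPd u (p - q) := pd_sub hq hgt (by omega) huq hup
        have := ih q (p - q) u (by omega) hq (by omega) (by omega) huq hpq
        rw [Nat.gcd_sub_self_right (le_of_lt hgt)] at this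
        rwa [Nat.gcd_comm]

lemma count_of_period : ∀ (m : ℕ) (g : ℕ) (u : List ℕ), 0 < g → HasPd u g →
    u.length = m * g → u.count 1 = m * ((u.take g).count 1) := by
  intro m
  induction m with
  | zero =>
      intro g u _ _ hlen
      have : u = [] := List.eq_nil_of_length_eq_zero (by omega)
      subst this
      simp
  | succ m ih =>
      intro g u hg hpd hlen
      have hglen : g ≤ u.length := by rw [hlen]; nlinarith
      have hsplit : u = u.take g ++ u.drop g := (List.take_append_drop g u).symm
      have hdlen : (u.drop g).length = m * g := by
        rw [List.length_drop, hlen]; ring_nf; omega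
      have hdget : ∀ i, i < (u.drop g).length → (u.drop g).getD i 0 = u.getD (g + i) 0 := by
        intro i hi
        rw [List.getD_eq_getElem?_getD, List.getD_eq_getElem?_getD, List.getElem?_drop]
      have hdpd : HasPd (u.drop g) g := by
        intro i hi
        rw [hdget i (by omega), hdget (i+g) (by omega)]
        have := hpd (g+i) (by rw [List.length_drop] at hi; omega)
        rw [this]
        congr 1
        omega
      have ihd := ih g (u.drop g) hg hdpd hdlen
      have hcnt : u.count 1 = (u.take g).count 1 + (u.drop g).count 1 := by
        conv_lhs => rw [hsplit]
        rw [List.count_append]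
      rcases Nat.eq_zero_or_pos m with hm | hm
      · subst hm
        have hnil : u.drop g = [] := List.eq_nil_of_length_eq_zero (by omega)
        rw [hcnt, hnil]
        show _ + 0 = _
        ring
      · have hslice : (u.drop g).take g = u.take g := by
          apply List.ext_getElem
          · rw [List.length_take, List.length_take, hdlen, hlen]
            have : g ≤ m * g := by nlinarith
            omega
          · intro i h1 h2
            have hig : i < g := by
              rw [List.length_take] at h1
              omega
            have hilen : i + g < u.length := by
              rw [hlen]
              have : 2 * g ≤ (m+1) * g := by nlinarith
              omega
            have hx : ((u.drop g).take g).getD i 0 = u.getD (i + g) 0 := by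
              rw [List.getD_eq_getElem?_getD, List.getElem?_take, if_pos hig,
                List.getElem?_drop, ← List.getD_eq_getElem?_getD, Nat.add_comm]
            have hy : (u.take g).getD i 0 = u.getD i 0 := by
              rw [List.getD_eq_getElem?_getD, List.getElem?_take, if_pos hig,
                ← List.getD_eq_getElem?_getD]
            rw [← List.getD_eq_getElem _ 0, ← List.getD_eq_getElem _ 0, hx, hy, ← hpd i hilen]
        rw [hcnt, ihd, hslice]
        ring

lemma gcd_Fb_succ (n : ℕ) : Nat.gcd (Fb (n+1)) (Fb n) = 1 := by
  induction n with
  | zero => decide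
  | succ m ih =>
      show Nat.gcd (Fb m + Fb (m+1)) (Fb (m+1)) = 1
      rw [Nat.gcd_add_self_left]
      rwa [Nat.gcd_comm]

lemma gcd_Fb2 (n : ℕ) : Nat.gcd (Fb (n+3)) (Fb (n+1)) = 1 := by
  show Nat.gcd (Fb (n+1) + Fb (n+2)) (Fb (n+1)) = 1
  rw [Nat.add_comm, Nat.gcd_add_self_left]
  exact gcd_Fb_succ (n+1)

lemma ones_fhat (k : ℕ) : (fhat (k+1)).count 1 + (fhat (k+2)).count 1 = Fb (k+1) := by
  induction k using Nat.strong_induction_on with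
  | _ k ih =>
    match k with
    | 0 => decide
    | 1 => decide
    | (m+2) =>
        have h1 := ih (m+1) (by omega)
        rw [show m+1+1 = m+2 from rfl, show m+1+2 = m+3 from rfl] at h1
        have h0 := ih m (by omega)
        have r3 : (fhat (m+3)).count 1 = 2 * (fhat (m+1)).count 1 + (fhat m).count 1 := by
          rw [fhat_rec m, List.count_append, List.count_append]
          ring
        have r4 : (fhat (m+4)).count 1 = 2 * (fhat (m+2)).count 1 + (fhat (m+1)).count 1 := by
          rw [fhat_rec (m+1), List.count_append, List.count_append]
          ring
        show (fhat (m+3)).count 1 + (fhat (m+4)).count 1 = Fb (m+3)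
        rw [r3, r4]
        show _ = Fb (m+1) + Fb (m+2)
        omega
lemma infPrefix_vals {X : List ℕ} {L : ℕ} (h : InfPrefix X (suffixFrom fibWord L)) :
    ∀ i, i < X.length → X.getD i 0 = fibWord (L + i) := by
  intro i hi
  have := h i hi
  simp only [suffixFrom, Nat.zero_add] at this
  exact this.symm

lemma c_pal (n : ℕ) : Pal (fibCSeq (n+3)) := by
  have p1 := fhat_pal (n+1)
  have p2 := fhat_pal (n+2)
  show Pal (fhat (n+1) ++ fhat (n+2) ++ fhat (n+1))
  unfold Pal at *
  simp [List.reverse_append, p1, p2, List.append_assoc]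

lemma c_len (n : ℕ) : (fibCSeq (n+3)).length = Fb (n+1) + Fb (n+2) + Fb (n+1) := by
  show (fhat (n+1) ++ fhat (n+2) ++ fhat (n+1)).length = _
  simp [fhat_length]
  omega

lemma Fb3 (n : ℕ) : Fb (n+3) = Fb (n+1) + Fb (n+2) := rfl

lemma hs_c (n : ℕ) : InfPrefix (fibCSeq (n+3)) (suffixFrom fibWord (Cw (n+3)).length) := by
  have h := part1 (n+4)
  rw [show (n+4) = (n+3)+1 from rfl, Cw_succ] at h
  exact infPrefix_suffixFrom h

lemma hs_ustar (n : ℕ) : InfPrefix (ustar n) (suffixFrom fibWord (Cw (n+3)).length) := by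
  have h := part1 (n+5)
  rw [show (n+5) = (n+3)+1+1 from rfl, Cw_succ, Cw_succ, List.append_assoc] at h
  have h2 := infPrefix_suffixFrom h
  refine occursAt_prefix ?_ h2
  refine ⟨fhat n ++ fhat (n+1) ++ fhat (n+2), ?_⟩
  show ustar n ++ _ = fhat (n+1) ++ fhat (n+2) ++ fhat (n+1) ++
    (fhat (n+1+1) ++ fhat (n+1+2) ++ fhat (n+1+1))
  rw [show n+1+1 = n+2 from rfl, show n+1+2 = n+3 from rfl, fhat_rec n]
  simp [ustar, List.append_assoc]

lemma hq_ustar (n : ℕ) : HasPd (ustar n) (Fb (n+3)) := by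
  have hdecomp : ustar n = (fhat (n+1) ++ fhat (n+2)) ++ fibCSeq (n+3) := by
    show _ = _ ++ (fhat (n+1) ++ fhat (n+2) ++ fhat (n+1))
    simp [ustar, List.append_assoc]
  have hzlen : (fhat (n+1) ++ fhat (n+2)).length = Fb (n+3) := by
    simp [fhat_length, Fb3]
  have hculen : (ustar n).length = Fb (n+3) + (fibCSeq (n+3)).length := by
    rw [hdecomp, List.length_append, hzlen]
  intro i hi
  have hic : i < (fibCSeq (n+3)).length := by omega
  have h1 : (ustar n).getD i 0 = (fibCSeq (n+3)).getD i 0 := by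
    apply getD_prefix
    · exact ⟨fhat (n+2) ++ fhat (n+1), by
        show fhat (n+1) ++ fhat (n+2) ++ fhat (n+1) ++ _ = _
        simp [ustar, List.append_assoc]⟩
    · exact hic
  have h2 : (ustar n).getD (i + Fb (n+3)) 0 = (fibCSeq (n+3)).getD i 0 := by
    rw [hdecomp, Nat.add_comm i, ← hzlen, getD_append_right']
  rw [h1, h2]

lemma occ_c (n : ℕ) : OccursAt (fibCSeq (n+3)) fibWord (Sw n).length := by
  have hpre : (Sw n ++ fibCSeq (n+3)) ++ (fhat n ++ fhat (n+1)) = Sw (n+3) := by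
    rw [show n+3 = n+1+1+1 from rfl, Sw_succ, Sw_succ, Sw_succ,
      show n+1+1 = n+2 from rfl, show n+1+1+1 = n+3 from rfl, fhat_rec n]
    show Sw n ++ (fhat (n+1) ++ fhat (n+2) ++ fhat (n+1)) ++ _ = _
    simp [List.append_assoc]
  have : InfPrefix (Sw n ++ fibCSeq (n+3)) fibWord := by
    apply infPrefix_of_fibh (m := n+3)
    have hpref : (Sw n ++ fibCSeq (n+3)) <+: Sw (n+3) := ⟨fhat n ++ fhat (n+1), hpre⟩
    exact hpref.trans (Sw_prefix_fibh (n+3))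
  exact infPrefix_occursAt this

lemma Swn_lt_L (n : ℕ) : (Sw n).length < (Cw (n+3)).length := by
  have h1 : (Cw (n+3)).length = (Sw (n+2)).length + Fb (n+1) + Fb n := by
    rw [Cw_eq, List.length_append, List.length_append, fhat_length, fhat_length]
  have h2 : (Sw (n+2)).length = (Sw n).length + Fb (n+1) + Fb (n+2) := by
    rw [show n+2 = n+1+1 from rfl, Sw_succ, Sw_succ, List.length_append, List.length_append,
      fhat_length, fhat_length, show n+1+1 = n+2 from rfl]
  have := Fb_pos (n+1) (by omega)
  omega

lemma max_n (n : ℕ) (u : List ℕ) (hpal : Pal u)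
    (hpre : InfPrefix u (suffixFrom fibWord (Cw (n+3)).length))
    (hocc : ∃ j < (Cw (n+3)).length, OccursAt u fibWord j) :
    u.length ≤ (fibCSeq (n+3)).length := by
  by_contra hgt
  push_neg at hgt
  obtain ⟨j, hjL, hju⟩ := hocc
  have hu_s := infPrefix_vals hpre
  have hc_s := infPrefix_vals (hs_c n)
  have hustar_s := infPrefix_vals (hs_ustar n)
  have hclen := c_len n
  have hulen := ustar_len n
  have hqc : Fb (n+3) ≤ (fibCSeq (n+3)).length := by rw [hclen, Fb3]; omega
  have hcu : (ustar n).length = (fibCSeq (n+3)).length + Fb (n+3) := by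
    rw [hclen, hulen, Fb3]; ring
  rcases Nat.lt_or_ge u.length (ustar n).length with hcase | hcase
  · -- Fine–Wilf contradiction
    set p := u.length - (fibCSeq (n+3)).length with hp
    set q := Fb (n+3) with hqdef
    have hp_pos : 0 < p := by omega
    have hq_pos : 0 < q := by rw [hqdef, Fb3]; have := Fb_pos (n+1) (by omega); omega
    have hpq : p < q := by omega
    have hic : ∀ i, i < (fibCSeq (n+3)).length → u.getD i 0 = (fibCSeq (n+3)).getD i 0 := by
      intro i hi
      rw [hu_s i (by omega), hc_s i hi]
    have hpu : HasPd u p := by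
      intro i hip
      have hi_c : i < (fibCSeq (n+3)).length := by omega
      have e1 := pal_getD hpal (i := i + p) (by omega)
      have hr1 : u.length - 1 - (i + p) = (fibCSeq (n+3)).length - 1 - i := by omega
      rw [hr1] at e1
      have hrc : (fibCSeq (n+3)).length - 1 - i < (fibCSeq (n+3)).length := by omega
      have e2 : u.getD ((fibCSeq (n+3)).length - 1 - i) 0
          = (fibCSeq (n+3)).getD ((fibCSeq (n+3)).length - 1 - i) 0 := hic _ hrc
      have e3 := pal_getD (c_pal n) (i := (fibCSeq (n+3)).length - 1 - i) hrc
      rw [show (fibCSeq (n+3)).length - 1 - ((fibCSeq (n+3)).length - 1 - i) = i by omega] at e3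
      rw [e1, e2, e3, ← hic i hi_c]
    have hqu : HasPd u q := by
      intro i hiq
      have hiu : i < (ustar n).length := by omega
      have hiu2 : i + q < (ustar n).length := by omega
      rw [hu_s i (by omega), hu_s (i+q) (by omega), ← hustar_s i hiu, ← hustar_s (i+q) hiu2]
      exact hq_ustar n i hiu2
    have hlenu : p + q ≤ u.length := by omega
    have hg := fw_aux (p+q) p q u (le_refl _) hp_pos hq_pos hlenu hpu hqu
    set g := Nat.gcd p q with hgdef
    have hgq : g ∣ q := Nat.gcd_dvd_right p q
    have hgp : g ≤ p := Nat.le_of_dvd hp_pos (Nat.gcd_dvd_left p q)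
    have hg_pos : 0 < g := Nat.gcd_pos_of_pos_left _ hp_pos
    set z := fhat (n+1) ++ fhat (n+2) with hzdef
    have hzlen : z.length = q := by simp [hzdef, fhat_length, hqdef, Fb3]
    have hz_u : ∀ i, i < z.length → z.getD i 0 = u.getD i 0 := by
      intro i hi
      have hizc : i < (fibCSeq (n+3)).length := by omega
      have : z.getD i 0 = (fibCSeq (n+3)).getD i 0 :=
        (getD_prefix (⟨fhat (n+1), rfl⟩ : z <+: fibCSeq (n+3)) hi).symm
      rw [this, ← hic i hizc]
    have hz_pd : HasPd z g := by
      intro i hi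
      rw [hz_u i (by omega), hz_u (i+g) (by omega)]
      apply hg
      omega
    have hq_eq : q = (q / g) * g := (Nat.div_mul_cancel hgq).symm
    have hcount := count_of_period (q/g) g z hg_pos hz_pd (by rw [hzlen]; exact hq_eq)
    have hz_count : z.count 1 = Fb (n+1) := by
      rw [hzdef, List.count_append]
      exact ones_fhat n
    have hm2 : 2 ≤ q / g := by
      rcases Nat.lt_or_ge (q/g) 2 with h | h
      · exfalso
        interval_cases h' : q / g <;> omega
      · exact h
    have hd1 : (q/g) ∣ Fb (n+1) := ⟨(z.take g).count 1, by rw [← hz_count, hcount]⟩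
    have hd2 : (q/g) ∣ Fb (n+3) := ⟨g, by rw [← hqdef]; exact hq_eq⟩
    have := Nat.dvd_gcd hd2 hd1
    rw [gcd_Fb2 n] at this
    have := Nat.le_of_dvd (by omega) this
    omega
  · -- long palindrome: contains ustar, contradict Nocc
    have hoccU : OccursAt (ustar n) fibWord j := by
      intro i hi
      rw [hju i (by omega), hu_s i (by omega), ← hustar_s i hi]
    exact absurd (Nocc n j hoccU) (by omega)

/-- The palindromic c-factorization of the Fibonacci word is
`pc(f) = (c₋₁, c₀, c₁, c₂, …)` with `c₋₁ = 0`, `c₀ = 1`, `c₁ = 0`, and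
`cₙ = f̂_{n-1} f̂_n f̂_{n-1}` for all `n ≥ 2`. -/
theorem fib_pal_c_factorization :
    IsPalCFact fibWord fibCSeq := by
  refine ⟨fun n => part1 n, fun N => ⟨N, Cw_len N⟩, fun i => ?_⟩
  match i with
  | 0 =>
      right
      constructor
      · rintro ⟨u, hne, hpal, hpre, j, hj, hocc⟩
        have hj' : j < 0 := hj
        omega
      · show fibCSeq 0 = [fibWord (Cw 0).length]
        decide
  | 1 =>
      right
      constructor
      · rintro ⟨u, hne, hpal, hpre, j, hj, hocc⟩
        have hj1 : j < 1 := hj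
        have hj0 : j = 0 := by omega
        subst hj0
        have hpos : 0 < u.length := List.length_pos_iff.mpr hne
        have h1 := hpre 0 hpos
        have h2 := hocc 0 hpos
        simp only [suffixFrom, Nat.add_zero, Nat.zero_add] at h1 h2
        have h1' : fibWord 1 = u.getD 0 0 := h1
        have h2' : fibWord 0 = u.getD 0 0 := h2
        rw [show fibWord 1 = 1 by decide] at h1'
        rw [show fibWord 0 = 0 by decide] at h2'
        omega
      · show fibCSeq 1 = [fibWord (Cw 1).length]
        decide
  | 2 =>
      left
      refine ⟨by decide, by show (fibCSeq 2).reverse = fibCSeq 2; decide, ?_, ⟨0, ?_, ?_⟩, ?_⟩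
      · intro i hi
        have hi1 : i < 1 := hi
        have : i = 0 := by omega
        subst this
        show fibWord 2 = (fibCSeq 2).getD 0 0
        decide
      · exact (by omega : (0:ℕ) < 2)
      · intro i hi
        have hi1 : i < 1 := hi
        have : i = 0 := by omega
        subst this
        show fibWord 0 = (fibCSeq 2).getD 0 0
        decide
      · intro u hpal hpre ⟨j, hj, hocc⟩
        show u.length ≤ 1
        by_contra hgt
        push_neg at hgt
        have h0' := hpre 0 (by omega)
        have h1' := hpre 1 (by omega)
        have h0 : fibWord 2 = u.getD 0 0 := h0'
        have h1 : fibWord 3 = u.getD 1 0 := h1'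
        rw [show fibWord 2 = 0 by decide] at h0
        rw [show fibWord 3 = 0 by decide] at h1
        have hj2 : j < 2 := hj
        have o0 := hocc 0 (by omega)
        have o1 := hocc 1 (by omega)
        rw [Nat.add_zero] at o0
        interval_cases j
        · have o1' : fibWord 1 = u.getD 1 0 := o1
          rw [show fibWord 1 = 1 by decide] at o1'
          omega
        · rw [show fibWord 1 = 1 by decide] at o0
          omega
  | (m+3) =>
      left
      refine ⟨?_, c_pal m, hs_c m, ⟨(Sw m).length, Swn_lt_L m, occ_c m⟩,
        fun u hpal hpre hocc => max_n m u hpal hpre hocc⟩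
      · intro hnil
        have hc := c_len m
        rw [hnil] at hc
        simp only [List.length_nil] at hc
        have hpos := Fb_pos (m+1) (by omega)
        omega
end

section
/- If m is even, then for all n ≥ m−1 the lengths of the p-singular words satisfy |z_n| = |z_{n−1}| + |z_{n−2}| + ⋯ + |z_{n−m}|. If m is odd, then for all n ≥ m−1 they satisfy |z_n| = |z_{n−1}| + |z_{n−2}| + ⋯ + |z_{n−m}| + (−1)^n. -/
/-- The `m`-bonacci morphism `φ_m` on letters:
`φ_m(k) = 0·(k+1)` for `0 ≤ k ≤ m-2`, and `φ_m(m-1) = 0`. -/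
def phiL (m a : ℕ) : List ℕ := if a = m - 1 then [0] else [0, a + 1]

/-- The `m`-bonacci morphism applied to a finite word. -/
def phiW (m : ℕ) (u : List ℕ) : List ℕ := u.flatMap (phiL m)

/-- The iterates `h n = φ_mⁿ(0)`. -/
def hword (m : ℕ) : ℕ → List ℕ
  | 0 => [0]
  | n + 1 => phiW m (hword m n)

/-- The `m`-bonacci word, the infinite fixed point of `φ_m` beginning with `0`
(its `i`-th letter is the `i`-th letter of any sufficiently long iterate `φ_mⁿ(0)`). -/
def mbon (m : ℕ) : ℕ → ℕ := fun i => (hword m (i + 1)).getD i 0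

/-- Auxiliary course-of-values construction for the p-singular words:
`zsAux m (k+1) i` gives the correct value of the (index-shifted) p-singular word
`z_{i-1}` for every `i ≤ k`. -/
def zsAux (m : ℕ) : ℕ → ℕ → List ℕ
  | 0, _ => []
  | k + 1, i =>
    if i < k then zsAux m k i
    else if i = 0 then []
    else if i = 1 then [0]
    else if i ≤ m then
      -- here `i = n+1` with `1 ≤ n ≤ m-1`:
      -- `z_n = z_{n-2} z_{n-3} ⋯ z_1 z_0 · n · z_0 z_1 ⋯ z_{n-3} z_{n-2}`
      (((List.range (i - 2)).map (fun j => zsAux m k (i - 2 - j))).flatten)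
        ++ [i - 1]
        ++ (((List.range (i - 2)).map (fun j => zsAux m k (1 + j))).flatten)
    else
      -- here `i = n+1` with `n ≥ m`:
      -- `z_n = z_{n-2} ⋯ z_{n-(m-1)} · z_{n-m} · z_{n-(m+1)} · z_{n-m} · z_{n-(m-1)} ⋯ z_{n-2}`
      (((List.range (m - 2)).map (fun j => zsAux m k (i - 2 - j))).flatten)
        ++ zsAux m k (i - m) ++ zsAux m k (i - m - 1) ++ zsAux m k (i - m)
        ++ (((List.range (m - 2)).map (fun j => zsAux m k (i - m + 1 + j))).flatten)

/-- The (index-shifted) p-singular words for the `m`-bonacci word: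
`zsw m 0 = z₋₁ = ε`, and `zsw m (n+1) = zₙ` for `n ≥ 0`, where
`z₀ = 0`, `zₙ = z_{n-2} z_{n-3} ⋯ z_1 z_0 · n · z_0 z_1 ⋯ z_{n-3} z_{n-2}` for `1 ≤ n ≤ m-1`
(`n` denoting the single letter `n`), and
`zₙ = z_{n-2} z_{n-3} ⋯ z_{n-(m-1)} z_{n-m} z_{n-(m+1)} z_{n-m} z_{n-(m-1)} ⋯ z_{n-3} z_{n-2}`
for `n ≥ m`. -/
def zsw (m k : ℕ) : List ℕ := zsAux m (k + 1) k

def Slen (m i : ℕ) : ℤ := ((zsw m i).length : ℤ)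

def Usum (m a r : ℕ) : ℤ := ∑ j ∈ Finset.range r, Slen m (a + j)

lemma zsAux_stab (m : ℕ) : ∀ k i, i < k → zsAux m k i = zsw m i := by
  intro k
  induction k with
  | zero => omega
  | succ k ih =>
    intro i hi
    rcases Nat.lt_or_ge i k with h | h
    · rw [zsAux]; simp only [h, if_pos]; exact ih i h
    · have : i = k := by omega
      subst this; rfl

lemma flatlen (r : ℕ) (f : ℕ → List ℕ) :
    ((((List.range r).map f).flatten.length : ℤ)) =
      ∑ j ∈ Finset.range r, ((f j).length : ℤ) := by
  induction r with
  | zero => simp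
  | succ r ih =>
    rw [List.range_succ, List.map_append, List.flatten_append, List.length_append,
      Finset.sum_range_succ, Nat.cast_add, ih]
    simp

lemma Usum_succ (m a r : ℕ) : Usum m a (r + 1) = Usum m a r + Slen m (a + r) :=
  Finset.sum_range_succ _ _

lemma Usum_succ' (m a r : ℕ) : Usum m a (r + 1) = Slen m a + Usum m (a + 1) r := by
  rw [Usum, Finset.sum_range_succ']
  simp only [Usum, Nat.add_zero]
  rw [add_comm]
  congr 1
  refine Finset.sum_congr rfl fun j _ => ?_
  congr 1; omega

lemma Slen_zero (m : ℕ) : Slen m 0 = 0 := rfl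

lemma Slen_one (m : ℕ) : Slen m 1 = 1 := rfl

/-- the middle recurrence, specialized at `i = s + 2 ≤ m` -/
lemma Slen_mid (m s : ℕ) (h : s + 2 ≤ m) :
    Slen m (s + 2) = Usum m 1 s + 1 + Usum m 1 s := by
  have e : zsw m (s + 2) = zsAux m (s + 3) (s + 2) := rfl
  rw [Slen, e, zsAux]
  rw [if_neg (by omega : ¬ (s + 2 < s + 2)), if_neg (by omega : ¬ (s + 2 = 0)),
    if_neg (by omega : ¬ (s + 2 = 1)), if_pos h]
  rw [show s + 2 - 2 = s from by omega]
  simp only [List.length_append, List.length_singleton]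
  push_cast
  rw [flatlen, flatlen]
  have r1 : ∀ j ∈ Finset.range s, ((zsAux m (s + 2) (s - j)).length : ℤ)
      = Slen m (s - j) := by
    intro j hj
    rw [zsAux_stab m (s + 2) (s - j) (by omega)]
    rfl
  have r2 : ∀ j ∈ Finset.range s, ((zsAux m (s + 2) (1 + j)).length : ℤ)
      = Slen m (1 + j) := by
    intro j hj
    simp only [Finset.mem_range] at hj
    rw [zsAux_stab m (s + 2) (1 + j) (by omega)]
    rfl
  rw [Finset.sum_congr rfl r1, Finset.sum_congr rfl r2]
  have hrefl : ∑ j ∈ Finset.range s, Slen m (s - j) = Usum m 1 s := by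
    rw [Usum, ← Finset.sum_range_reflect (fun j => Slen m (1 + j)) s]
    refine Finset.sum_congr rfl fun j hj => ?_
    simp only [Finset.mem_range] at hj
    congr 1; omega
  rw [hrefl, Usum]

/-- the large recurrence, specialized at `i = m + t + 1` -/
lemma Slen_big (m t : ℕ) (hm : 2 ≤ m) :
    Slen m (m + t + 1) = Usum m (t + 2) (m - 2) + Slen m (t + 1) + Slen m t
      + Slen m (t + 1) + Usum m (t + 2) (m - 2) := by
  have e : zsw m (m + t + 1) = zsAux m (m + t + 2) (m + t + 1) := rfl
  rw [Slen, e, zsAux]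
  rw [if_neg (by omega : ¬ (m + t + 1 < m + t + 1)),
    if_neg (by omega : ¬ (m + t + 1 = 0)), if_neg (by omega : ¬ (m + t + 1 = 1)),
    if_neg (by omega : ¬ (m + t + 1 ≤ m))]
  simp only [List.length_append]
  push_cast
  rw [flatlen, flatlen]
  rw [zsAux_stab m (m + t + 1) (m + t + 1 - m - 1) (by omega),
      zsAux_stab m (m + t + 1) (m + t + 1 - m) (by omega)]
  rw [show m + t + 1 - m - 1 = t from by omega, show m + t + 1 - m = t + 1 from by omega]
  have r1 : ∀ j ∈ Finset.range (m - 2),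
      ((zsAux m (m + t + 1) (m + t - 1 - j)).length : ℤ) = Slen m (m + t - 1 - j) := by
    intro j hj
    rw [zsAux_stab m (m + t + 1) _ (by omega)]
    rfl
  have r2 : ∀ j ∈ Finset.range (m - 2),
      ((zsAux m (m + t + 1) (t + 1 + 1 + j)).length : ℤ) = Slen m (t + 2 + j) := by
    intro j hj
    simp only [Finset.mem_range] at hj
    rw [zsAux_stab m (m + t + 1) _ (by omega)]
    rfl
  rw [Finset.sum_congr rfl r1, Finset.sum_congr rfl r2]
  have hrefl : ∑ j ∈ Finset.range (m - 2), Slen m (m + t - 1 - j)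
      = Usum m (t + 2) (m - 2) := by
    rw [Usum, ← Finset.sum_range_reflect (fun j => Slen m (t + 2 + j)) (m - 2)]
    refine Finset.sum_congr rfl fun j hj => ?_
    simp only [Finset.mem_range] at hj
    congr 1; omega
  rw [hrefl, Usum]
  rfl

/-- the parity auxiliary lemma -/
lemma Slen_parity (m : ℕ) : ∀ s, s + 1 ≤ m →
    Slen m (s + 1) = Usum m 1 s + (if Even s then 1 else 0) := by
  intro s
  induction s with
  | zero => intro _; simp [Slen_one, Usum]
  | succ s ih =>
    intro h
    rw [Slen_mid m s (by omega), Usum_succ]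
    rw [show 1 + s = s + 1 from by omega, ih (by omega)]
    rcases Nat.even_or_odd s with he | ho
    · have h1 : ¬ Even (s + 1) := by simp [Nat.even_add_one, he]
      rw [if_pos he, if_neg h1]
      ring
    · have h2 : ¬ Even s := Nat.not_even_iff_odd.mpr ho
      have h1 : Even (s + 1) := by simp [Nat.even_add_one, h2]
      rw [if_neg h2, if_pos h1]
      ring

lemma key (m : ℕ) (hm : 2 ≤ m) : ∀ t, Slen m (m + t)
    = Usum m t m + (if Even m then 0 else 1) * (-1 : ℤ) ^ t := by
  intro t
  induction t with
  | zero =>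
    have mid : Slen m m = Usum m 1 (m - 2) + 1 + Usum m 1 (m - 2) := by
      have := Slen_mid m (m - 2) (by omega)
      rwa [show m - 2 + 2 = m from by omega] at this
    have a1 : Usum m 0 m = Usum m 1 (m - 1) := by
      have := Usum_succ' m 0 (m - 1)
      rw [show m - 1 + 1 = m from by omega, Slen_zero, zero_add] at this
      rw [this]
    have a2 : Usum m 1 (m - 1) = Usum m 1 (m - 2) + Slen m (m - 1) := by
      have := Usum_succ m 1 (m - 2)
      rwa [show m - 2 + 1 = m - 1 from by omega, show 1 + (m - 2) = m - 1 from by omega]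
        at this
    have hpar : Slen m (m - 1) = Usum m 1 (m - 2) + (if Even (m - 2) then 1 else 0) := by
      have := Slen_parity m (m - 2) (by omega)
      rwa [show m - 2 + 1 = m - 1 from by omega] at this
    simp only [Nat.add_zero, pow_zero, mul_one]
    rw [mid, a1, a2, hpar]
    rcases Nat.even_or_odd m with he | ho
    · have h2 : Even (m - 2) := by
        rcases he with ⟨r, hr⟩; exact ⟨r - 1, by omega⟩
      rw [if_pos he, if_pos h2]; ring
    · have h1 : ¬ Even m := Nat.not_even_iff_odd.mpr ho
      have h2 : ¬ Even (m - 2) := by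
        intro ⟨r, hr⟩; exact h1 ⟨r + 1, by omega⟩
      rw [if_neg h1, if_neg h2]; ring
  | succ t ih =>
    have big := Slen_big m t hm
    rw [show m + (t + 1) = m + t + 1 from by omega, big]
    have hU1 : Usum m (t + 1) m = Slen m (t + 1) + Usum m (t + 2) (m - 1) := by
      have := Usum_succ' m (t + 1) (m - 1)
      rwa [show m - 1 + 1 = m from by omega, show t + 1 + 1 = t + 2 from rfl] at this
    have hU2 : Usum m (t + 2) (m - 1) = Usum m (t + 2) (m - 2) + Slen m (m + t) := by
      have := Usum_succ m (t + 2) (m - 2)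
      rwa [show m - 2 + 1 = m - 1 from by omega, show t + 2 + (m - 2) = m + t from by omega]
        at this
    have hU0 : Usum m t m = Slen m t + (Slen m (t + 1) + Usum m (t + 2) (m - 2)) := by
      have b1 := Usum_succ' m t (m - 1)
      rw [show m - 1 + 1 = m from by omega] at b1
      have b2 := Usum_succ' m (t + 1) (m - 2)
      rw [show m - 2 + 1 = m - 1 from by omega, show t + 1 + 1 = t + 2 from rfl] at b2
      rw [b1, b2]
    rw [hU1, hU2, ih, hU0]
    ring

/-- If `m` is even, then for all `n ≥ m-1` the lengths of the p-singular words satisfy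
`|zₙ| = |z_{n-1}| + |z_{n-2}| + ⋯ + |z_{n-m}|`; if `m` is odd, then for all `n ≥ m-1`
they satisfy `|zₙ| = |z_{n-1}| + |z_{n-2}| + ⋯ + |z_{n-m}| + (-1)ⁿ`
(recall `zₙ = zsw m (n+1)`, so `z_{n-k} = zsw m (n+1-k)`). -/
theorem psingular_length_rec (m : ℕ) (hm : 2 ≤ m) (n : ℕ) (hn : m - 1 ≤ n) :
    (Even m → ((zsw m (n + 1)).length : ℤ) =
      ∑ k ∈ Finset.Icc 1 m, ((zsw m (n + 1 - k)).length : ℤ)) ∧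
    (Odd m → ((zsw m (n + 1)).length : ℤ) =
      (∑ k ∈ Finset.Icc 1 m, ((zsw m (n + 1 - k)).length : ℤ)) + (-1) ^ n) := by
  obtain ⟨t, rfl⟩ : ∃ t, n = m - 1 + t := ⟨n - (m - 1), by omega⟩
  rw [show m - 1 + t + 1 = m + t from by omega]
  have hsum : ∑ k ∈ Finset.Icc 1 m, ((zsw m (m + t - k)).length : ℤ) = Usum m t m := by
    rw [← Finset.Ico_add_one_right_eq_Icc, Finset.sum_Ico_eq_sum_range,
      show m + 1 - 1 = m from by omega, Usum,
      ← Finset.sum_range_reflect (fun j => Slen m (t + j)) m]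
    refine Finset.sum_congr rfl fun j hj => ?_
    simp only [Finset.mem_range] at hj
    show ((zsw m (m + t - (1 + j))).length : ℤ) = Slen m (t + (m - 1 - j))
    rw [show m + t - (1 + j) = t + (m - 1 - j) from by omega]
    rfl
  rw [hsum]
  have hkey := key m hm t
  constructor
  · intro hE
    rw [if_pos hE, zero_mul, add_zero] at hkey
    exact hkey
  · intro hO
    have hE : ¬ Even m := Nat.not_even_iff_odd.mpr hO
    rw [if_neg hE, one_mul] at hkey
    have hpow : (-1 : ℤ) ^ t = (-1) ^ (m - 1 + t) := by
      rw [pow_add]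
      have hev : Even (m - 1) := Nat.Odd.sub_odd hO odd_one
      rw [hev.neg_one_pow, one_mul]
    rw [← hpow]
    exact hkey
end

section
/- For all n ≥ 0, the p-singular word z_n is not a factor of z_{n+1}. -/
/-! Write `Z_i = zsw m i = z_{i-1}`. Unfolding the recursion and telescoping over the products
`z_{n-2} ⋯ z_{n-m}` and `z_{n-m} ⋯ z_{n-2}` gives `Z_{i+1} = φ(Z_i) 0` for even `i` and
`0 Z_{i+1} = φ(Z_i)` for odd `i`. In `φ(w) 0` every `0` starts a block `φ(a)` and every nonzero
letter has a `0` on both sides, so an occurrence of `φ(u) 0` in `φ(w) 0` is the image of an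
occurrence of `u` in `w`. Hence an occurrence of `Z_{k+1}` in `Z_{k+2}` desubstitutes to one of
`Z_k` in `Z_{k+1}`, and descending in `k` ends with `Z_1 = 0` occurring in `Z_2 = 1`. -/

namespace List

variable {α : Type*} {c x y : α} {L v : List α}

theorem cons_infix_of_isChain (hL : L.IsChain (fun a b => a = c ∨ b = c))
    (hhead : L.head? = some c) (hv : v <:+: L) (hx : v.head? = some x) (hxc : x ≠ c) :
    c :: v <:+: L := by
  obtain ⟨s, t, rfl⟩ := hv
  rcases s.eq_nil_or_concat with rfl | ⟨s, d, rfl⟩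
  · simp_all [head?_append]
  · rw [concat_eq_append, append_assoc, isChain_append] at hL
    have hdx := hL.2.2 d (by simp) x (by simp [head?_append, hx])
    rw [or_iff_left hxc] at hdx
    exact ⟨s, t, by simp [hdx]⟩

theorem append_singleton_infix_of_isChain (hL : L.IsChain (fun a b => a = c ∨ b = c))
    (hlast : L.getLast? = some c) (hv : v <:+: L) (hy : v.getLast? = some y) (hyc : y ≠ c) :
    v ++ [c] <:+: L := by
  have hL' : L.reverse.IsChain (fun a b => a = c ∨ b = c) :=
    isChain_reverse.mpr (hL.imp fun _ _ => Or.symm)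
  have := cons_infix_of_isChain hL' (by simpa using hlast) (reverse_infix.mpr hv)
    (by simpa using hy) hyc
  rw [← reverse_infix]
  simpa using this

theorem cons_append_singleton_infix_of_isChain (hL : L.IsChain (fun a b => a = c ∨ b = c))
    (hhead : L.head? = some c) (hlast : L.getLast? = some c) (hv : v <:+: L)
    (hx : v.head? = some x) (hxc : x ≠ c) (hy : v.getLast? = some y) (hyc : y ≠ c) :
    c :: v ++ [c] <:+: L :=
  cons_infix_of_isChain hL hhead (append_singleton_infix_of_isChain hL hlast hv hy hyc)
    (by cases v <;> simp_all) hxc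

end List

section

variable {m : ℕ}

lemma phiW_nil : phiW m [] = [] := rfl

lemma phiW_cons (a : ℕ) (u : List ℕ) : phiW m (a :: u) = phiL m a ++ phiW m u := rfl

lemma phiW_append (u v : List ℕ) : phiW m (u ++ v) = phiW m u ++ phiW m v :=
  List.flatMap_append

lemma phiW_zero_cons (hm : 2 ≤ m) (u : List ℕ) : phiW m (0 :: u) = 0 :: 1 :: phiW m u := by
  simp [phiW_cons, phiL, show 0 ≠ m - 1 by omega]

lemma phiW_append_zero (hm : 2 ≤ m) (u : List ℕ) : phiW m (u ++ [0]) = phiW m u ++ [0, 1] := by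
  simp [phiW, phiL, show 0 ≠ m - 1 by omega]

lemma head?_phiL (a : ℕ) : (phiL m a).head? = some 0 := by
  unfold phiL
  split_ifs <;> rfl

lemma head?_phiW_append_zero (w : List ℕ) : (phiW m w ++ [0]).head? = some 0 := by
  cases w with
  | nil => rfl
  | cons a w => simp [phiW_cons, List.head?_append, head?_phiL]

lemma two_le_length_phiW_cons_append_zero (a : ℕ) (u : List ℕ) :
    2 ≤ (phiW m (a :: u) ++ [0]).length := by
  simp only [phiW_cons, phiL]
  split_ifs <;> simp

lemma isChain_phiW_append_zero (w : List ℕ) :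
    (phiW m w ++ [0]).IsChain (fun a b => a = 0 ∨ b = 0) := by
  induction w with
  | nil => simp [phiW]
  | cons b w ih =>
    rw [phiW_cons, List.append_assoc, List.isChain_append]
    refine ⟨?_, ih, fun _ _ y hy => ?_⟩
    · unfold phiL
      split_ifs <;> simp
    · rw [head?_phiW_append_zero, Option.mem_some_iff] at hy
      exact Or.inr hy.symm

lemma eq_and_prefix_of_phiL_append_prefix {a b : ℕ} {v v' : List ℕ} (hv : v.head? = some 0)
    (hv' : v'.head? = some 0) (h : phiL m a ++ v <+: phiL m b ++ v') : a = b ∧ v <+: v' := by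
  obtain ⟨r, rfl⟩ := List.head?_eq_some_iff.mp hv
  obtain ⟨r', rfl⟩ := List.head?_eq_some_iff.mp hv'
  unfold phiL at h
  split_ifs at h <;> simp_all

lemma prefix_of_phiW_append_zero_prefix {u w : List ℕ}
    (h : phiW m u ++ [0] <+: phiW m w ++ [0]) : u <+: w := by
  induction u generalizing w with
  | nil => exact List.nil_prefix
  | cons a u ih =>
    cases w with
    | nil =>
      have hlen := h.length_le
      rw [phiW_nil, List.nil_append, List.length_singleton] at hlen
      exact absurd hlen (by have := two_le_length_phiW_cons_append_zero (m := m) a u; omega)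
    | cons b w =>
      simp only [phiW_cons, List.append_assoc] at h
      obtain ⟨rfl, hrest⟩ := eq_and_prefix_of_phiL_append_prefix
        (head?_phiW_append_zero u) (head?_phiW_append_zero w) h
      exact List.cons_prefix_cons.mpr ⟨rfl, ih hrest⟩

lemma prefix_or_infix_of_infix_phiL_append {v L : List ℕ} {b : ℕ} (hv : v.head? = some 0)
    (h : v <:+: phiL m b ++ L) : v <+: phiL m b ++ L ∨ v <:+: L := by
  unfold phiL at h ⊢
  split_ifs at h ⊢
  · simpa [List.infix_cons_iff] using h
  · simp only [List.cons_append, List.nil_append, List.infix_cons_iff] at h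
    obtain h | h | h := h
    · exact Or.inl h
    · obtain ⟨r, rfl⟩ := List.head?_eq_some_iff.mp hv
      simp at h
    · exact Or.inr h

theorem infix_of_phiW_append_zero_infix {u w : List ℕ}
    (h : phiW m u ++ [0] <:+: phiW m w ++ [0]) : u <:+: w := by
  induction w with
  | nil =>
    cases u with
    | nil => exact List.nil_infix
    | cons a u =>
      have hlen := h.length_le
      rw [phiW_nil, List.nil_append, List.length_singleton] at hlen
      exact absurd hlen (by have := two_le_length_phiW_cons_append_zero (m := m) a u; omega)
  | cons b w ih =>
    rw [phiW_cons, List.append_assoc] at h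
    rcases prefix_or_infix_of_infix_phiL_append (head?_phiW_append_zero u) h with h | h
    · rw [← List.append_assoc, ← phiW_cons] at h
      exact (prefix_of_phiW_append_zero_prefix h).isInfix
    · exact (ih h).trans (List.suffix_cons b w).isInfix

lemma zsAux_of_lt {K i : ℕ} (h : i < K) : zsAux m K i = zsw m i := by
  induction K with
  | zero => omega
  | succ K ih =>
    rcases (Nat.lt_succ_iff.mp h).lt_or_eq with h | rfl
    · rw [zsAux, if_pos h, ih h]
    · rfl

lemma map_range_zsAux {K c : ℕ} {f : ℕ → ℕ} (hf : ∀ j < c, f j < K) :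
    (List.range c).map (fun j => zsAux m K (f j)) = (List.range c).map (fun j => zsw m (f j)) :=
  List.map_congr_left fun j hj => zsAux_of_lt (hf j (List.mem_range.mp hj))

def zswDesc (m c a : ℕ) : List ℕ := ((List.range c).map fun j => zsw m (a - j)).flatten

def zswAsc (m c b : ℕ) : List ℕ := ((List.range c).map fun j => zsw m (b + j)).flatten

lemma zswDesc_succ (c a : ℕ) : zswDesc m (c + 1) a = zsw m a ++ zswDesc m c (a - 1) := by
  simp only [zswDesc, List.range_succ_eq_map, List.map_cons, List.map_map, List.flatten_cons]
  congr 3 with j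
  simp [Nat.sub_add_eq, Nat.sub_right_comm a 1]

lemma zswDesc_succ_eq_append (c a : ℕ) :
    zswDesc m (c + 1) a = zswDesc m c a ++ zsw m (a - c) := by
  simp [zswDesc, List.range_succ]

lemma zswAsc_succ (c b : ℕ) : zswAsc m (c + 1) b = zsw m b ++ zswAsc m c (b + 1) := by
  simp only [zswAsc, List.range_succ_eq_map, List.map_cons, List.map_map, List.flatten_cons]
  congr 3 with j
  simp [Nat.add_assoc, Nat.add_comm 1]

lemma zsw_of_le {i : ℕ} (h2 : 2 ≤ i) (him : i ≤ m) :
    zsw m i = zswDesc m (i - 2) (i - 2) ++ [i - 1] ++ zswAsc m (i - 2) 1 := by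
  rw [zsw, zsAux, if_neg (by omega), if_neg (by omega), if_neg (by omega), if_pos him,
    map_range_zsAux (by omega), map_range_zsAux (by omega)]
  simp only [zswDesc, zswAsc, Nat.add_comm 1]

lemma zsw_of_lt {i : ℕ} (hm : 2 ≤ m) (him : m < i) :
    zsw m i = zswDesc m (m - 2) (i - 2) ++ zsw m (i - m) ++ zsw m (i - m - 1) ++ zsw m (i - m)
      ++ zswAsc m (m - 2) (i - m + 1) := by
  rw [zsw, zsAux, if_neg (by omega), if_neg (by omega), if_neg (by omega), if_neg (by omega),
    map_range_zsAux (by omega), map_range_zsAux (by omega), zsAux_of_lt (by omega),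
    zsAux_of_lt (by omega)]
  rfl

lemma zsw_zero : zsw m 0 = [] := rfl

lemma zsw_one : zsw m 1 = [0] := rfl

lemma zsw_two (hm : 2 ≤ m) : zsw m 2 = [1] := by
  rw [zsw_of_le le_rfl hm]
  rfl

def pad (k : ℕ) : List ℕ := List.replicate (k % 2) 0

lemma pad_congr {a b : ℕ} (h : a % 2 = b % 2) : pad a = pad b := by
  rw [pad, pad, h]

lemma pad_zero : pad 0 = [] := rfl

lemma pad_one : pad 1 = [0] := rfl

/-- With `Z_i = zsw m i`, this reads `Z_{i+1} = φ(Z_i) 0` for even `i` and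
`0 Z_{i+1} = φ(Z_i)` for odd `i`. -/
def PhiRel (m i : ℕ) : Prop := phiW m (zsw m i) ++ pad (i + 1) = pad i ++ zsw m (i + 1)

lemma phiW_append_eq_of_eq {u u' v v' p q r : List ℕ} (h : phiW m u ++ q = p ++ v)
    (h' : phiW m u' ++ r = q ++ v') : phiW m (u ++ u') ++ r = p ++ (v ++ v') := by
  rw [phiW_append, List.append_assoc, h', ← List.append_assoc, h, List.append_assoc]

lemma phiW_zswDesc {c a : ℕ} (hca : c ≤ a) (ih : ∀ i ≤ a, PhiRel m i) :
    phiW m (zswDesc m c a) ++ pad (a + c) = pad a ++ zswDesc m c (a + 1) := by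
  induction c generalizing a with
  | zero => simp [zswDesc, phiW_nil]
  | succ c ihc =>
    have hrest := ihc (a := a - 1) (by omega) fun i hi => ih i (by omega)
    rw [Nat.sub_add_cancel (by omega),
      pad_congr (show (a - 1 + c) % 2 = (a + (c + 1)) % 2 by omega),
      pad_congr (show (a - 1) % 2 = (a + 1) % 2 by omega)] at hrest
    rw [zswDesc_succ, zswDesc_succ, Nat.add_sub_cancel]
    exact phiW_append_eq_of_eq (ih a le_rfl) hrest

lemma phiW_zswAsc {c b : ℕ} (ih : ∀ i < b + c, PhiRel m i) :
    phiW m (zswAsc m c b) ++ pad (b + c) = pad b ++ zswAsc m c (b + 1) := by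
  induction c generalizing b with
  | zero => simp [zswAsc, phiW_nil]
  | succ c ihc =>
    have hrest := ihc (b := b + 1) fun i hi => ih i (by omega)
    rw [Nat.add_right_comm] at hrest
    rw [zswAsc_succ, zswAsc_succ, ← Nat.add_assoc]
    exact phiW_append_eq_of_eq (ih b (by omega)) hrest

lemma phiRel_zero : PhiRel m 0 := rfl

lemma phiRel_one (hm : 2 ≤ m) : PhiRel m 1 := by
  simp [PhiRel, zsw_one, zsw_two hm, phiW_zero_cons hm, phiW_nil, pad]

lemma phiW_zsw_of_le {j : ℕ} (h2 : 2 ≤ j) (hjm : j ≤ m) (ih : ∀ i < j, PhiRel m i) :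
    phiW m (zsw m j) ++ pad (j + 1) =
      pad j ++ ((zswDesc m (j - 2) (j - 1) ++ phiL m (j - 1)) ++ (0 :: zswAsc m (j - 2) 2)) := by
  have hDesc := phiW_zswDesc (c := j - 2) le_rfl fun i hi => ih i (by omega)
  rw [pad_congr (show (j - 2 + (j - 2)) % 2 = 0 % 2 by omega), pad_zero,
    pad_congr (show (j - 2) % 2 = j % 2 by omega), show j - 2 + 1 = j - 1 by omega] at hDesc
  have hmid : phiW m [j - 1] ++ [] = [] ++ phiL m (j - 1) := by simp [phiW_cons, phiW_nil]
  have hAsc := phiW_zswAsc (c := j - 2) (b := 1) fun i hi => ih i (by omega)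
  rw [pad_congr (show (1 + (j - 2)) % 2 = (j + 1) % 2 by omega), pad_one] at hAsc
  rw [zsw_of_le h2 hjm]
  exact phiW_append_eq_of_eq (phiW_append_eq_of_eq hDesc hmid) hAsc

lemma phiRel_of_lt {j : ℕ} (h2 : 2 ≤ j) (hjm : j < m) (ih : ∀ i < j, PhiRel m i) :
    PhiRel m j := by
  rw [PhiRel, phiW_zsw_of_le h2 hjm.le ih, zsw_of_le (by omega) hjm,
    show j + 1 - 2 = j - 2 + 1 by omega, zswDesc_succ_eq_append, zswAsc_succ,
    show j - 2 + 1 - (j - 2) = 1 by omega, zsw_one, phiL, if_neg (by omega)]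
  simp [show j - 1 + 1 = j by omega, show j - 2 + 1 = j - 1 by omega]

lemma phiRel_self (hm : 2 ≤ m) (ih : ∀ i < m, PhiRel m i) : PhiRel m m := by
  rw [PhiRel, phiW_zsw_of_le hm le_rfl ih, zsw_of_lt hm (by omega), Nat.add_sub_cancel_left,
    show m + 1 - 2 = m - 1 by omega, Nat.sub_self, zsw_one, zsw_zero, phiL, if_pos rfl]
  simp

lemma phiRel_of_gt {j : ℕ} (hm : 2 ≤ m) (hjm : m < j) (ih : ∀ i < j, PhiRel m i) :
    PhiRel m j := by
  have hDesc := phiW_zswDesc (c := m - 2) (a := j - 2) (by omega) fun i hi => ih i (by omega)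
  rw [pad_congr (show (j - 2 + (m - 2)) % 2 = (j - m) % 2 by omega),
    pad_congr (show (j - 2) % 2 = j % 2 by omega), show j - 2 + 1 = j - 1 by omega] at hDesc
  have hOuter : PhiRel m (j - m) := ih _ (by omega)
  have hInner : PhiRel m (j - m - 1) := ih _ (by omega)
  rw [PhiRel, pad_congr (show (j - m - 1) % 2 = (j - m + 1) % 2 by omega),
    show j - m - 1 + 1 = j - m by omega] at hInner
  have hAsc := phiW_zswAsc (c := m - 2) (b := j - m + 1) fun i hi => ih i (by omega)
  rw [pad_congr (show (j - m + 1 + (m - 2)) % 2 = (j + 1) % 2 by omega)] at hAsc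
  rw [PhiRel, zsw_of_lt hm hjm, zsw_of_lt (i := j + 1) hm (by omega),
    show j + 1 - 2 = j - 1 by omega, show j + 1 - m = j - m + 1 by omega, Nat.add_sub_cancel]
  exact phiW_append_eq_of_eq (phiW_append_eq_of_eq (phiW_append_eq_of_eq (phiW_append_eq_of_eq
    hDesc hOuter) hInner) hOuter) hAsc

theorem phiRel (hm : 2 ≤ m) (j : ℕ) : PhiRel m j := by
  induction j using Nat.strong_induction_on with
  | _ j ih =>
    obtain rfl | rfl | h2 := show j = 0 ∨ j = 1 ∨ 2 ≤ j by omega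
    · exact phiRel_zero
    · exact phiRel_one hm
    obtain hjm | rfl | hjm := lt_trichotomy j m
    · exact phiRel_of_lt h2 hjm ih
    · exact phiRel_self hm ih
    · exact phiRel_of_gt hm hjm ih

lemma zsw_succ_of_even (hm : 2 ≤ m) {k : ℕ} (hk : Even k) :
    zsw m (k + 1) = phiW m (zsw m k) ++ [0] := by
  have h := phiRel hm k
  rwa [PhiRel, pad_congr (show (k + 1) % 2 = 1 % 2 by grind), pad_one,
    pad_congr (show k % 2 = 0 % 2 by grind), pad_zero, List.nil_append, eq_comm] at h

lemma cons_zsw_succ_of_odd (hm : 2 ≤ m) {k : ℕ} (hk : Odd k) :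
    0 :: zsw m (k + 1) = phiW m (zsw m k) := by
  have h := phiRel hm k
  rwa [PhiRel, pad_congr (show (k + 1) % 2 = 0 % 2 by grind), pad_zero, List.append_nil,
    pad_congr (show k % 2 = 1 % 2 by grind), pad_one, eq_comm] at h

lemma head?_getLast?_zsw_two_mul_add_two (hm : 2 ≤ m) (i : ℕ) :
    (zsw m (2 * i + 2)).head? = some 1 ∧ (zsw m (2 * i + 2)).getLast? = some 1 := by
  have hodd := cons_zsw_succ_of_odd hm (odd_two_mul_add_one i)
  rw [zsw_succ_of_even hm (even_two_mul i)] at hodd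
  obtain ⟨r, hr⟩ := List.head?_eq_some_iff.mp (head?_phiW_append_zero (m := m) (zsw m (2 * i)))
  have hhead := hodd
  rw [hr, phiW_zero_cons hm, List.cons.injEq] at hhead
  refine ⟨by simp [hhead.2], ?_⟩
  have hlast := congrArg List.getLast? hodd
  rw [phiW_append_zero hm] at hlast
  simpa [hhead.2] using hlast

lemma zsw_infix_of_succ_infix (hm : 2 ≤ m) {k : ℕ}
    (h : zsw m (k + 1) <:+: zsw m (k + 2)) : zsw m k <:+: zsw m (k + 1) := by
  apply infix_of_phiW_append_zero_infix
  rcases Nat.even_or_odd k with hk | ⟨i, rfl⟩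
  · have hsuffix : zsw m (k + 2) <:+ phiW m (zsw m (k + 1)) :=
      cons_zsw_succ_of_odd hm hk.add_one ▸ List.suffix_cons 0 _
    rw [← zsw_succ_of_even hm hk]
    exact h.trans (hsuffix.isInfix.trans (List.prefix_append _ _).isInfix)
  · obtain ⟨hhead, hlast⟩ := head?_getLast?_zsw_two_mul_add_two hm i
    rw [zsw_succ_of_even hm (odd_two_mul_add_one i).add_one] at h
    rw [← cons_zsw_succ_of_odd hm (odd_two_mul_add_one i)]
    exact List.cons_append_singleton_infix_of_isChain (isChain_phiW_append_zero _)
      (head?_phiW_append_zero _) (by simp) h hhead one_ne_zero hlast one_ne_zero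

end

/-- For all `n ≥ 0`, the p-singular word `zₙ` is not a factor of `z_{n+1}`. -/
theorem psingular_not_infix_succ (m : ℕ) (hm : 2 ≤ m) (n : ℕ) :
    ¬ zsw m (n + 1) <:+: zsw m (n + 2) := by
  induction n with
  | zero => simp [zsw_one, zsw_two hm]
  | succ n ih => exact fun h => ih (zsw_infix_of_succ_infix hm h)
end
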